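/- arXiv:2504.20221 — 13 statements merged into one kernel-verified Lean document; each statement's English description precedes it below -/
import Mathlib

section
/- Let d > 0, let U ∈ C¹([−d,0];ℝ) be nonvanishing, let κ > 0, and let p ∈ C²([−d,0];ℝ) satisfy p″ − 2(U′/U)p′ − κ²p = 0 on [−d,0] with p′(−d) = 0. Then either p is identically zero on [−d,0], or p(x₃)p′(x₃) > 0 for every x₃ ∈ (−d,0]. -/
/-!
The equation says `(p' / U²)' = κ² p / U²`, so `f = p p' / U²` has derivative
`(p'² + κ² p²) / U² ≥ 0`. As `f(-d) = 0`, `f` is nondecreasing and nonnegative; if `p p' ≤ 0` at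
some `x > -d`, then `f ≡ 0` on `[-d, x]`, so its derivative vanishes there and `p = p' = 0` on
`[-d, x]`. Grönwall's inequality for `p² + p'²` then propagates `p = 0` from `x` to `[x, 0]`.
-/

open Set

theorem abs_energy_deriv_le {u v c k M : ℝ} (hc : |c| ≤ M) :
    |2 * u * v + 2 * v * (c * v + k * u)| ≤ (1 + |k| + 2 * M) * |u ^ 2 + v ^ 2| := by
  have hM : 0 ≤ M := (abs_nonneg c).trans hc
  have huv : 2 * |u| * |v| ≤ u ^ 2 + v ^ 2 := by
    nlinarith [sq_nonneg (|u| - |v|), sq_abs u, sq_abs v]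
  rw [abs_of_nonneg (by positivity : 0 ≤ u ^ 2 + v ^ 2)]
  calc |2 * u * v + 2 * v * (c * v + k * u)|
      = |2 * u * v + 2 * c * v ^ 2 + 2 * k * u * v| := by ring_nf
    _ ≤ |2 * u * v| + |2 * c * v ^ 2| + |2 * k * u * v| := abs_add_three _ _ _
    _ = 2 * |u| * |v| + 2 * |c| * v ^ 2 + |k| * (2 * |u| * |v|) := by
        simp only [abs_mul, abs_two, abs_pow, sq_abs]; ring
    _ ≤ (1 + |k| + 2 * M) * (u ^ 2 + v ^ 2) := by
        nlinarith [abs_nonneg k, sq_nonneg u, sq_nonneg v,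
          mul_le_mul_of_nonneg_right hc (sq_nonneg v), mul_le_mul_of_nonneg_left huv (abs_nonneg k)]

section LinearODE

variable {a b k M : ℝ} {p p' p'' c : ℝ → ℝ}

theorem eqOn_zero_of_linear_ode
    (hp : ∀ x ∈ Icc a b, HasDerivWithinAt p (p' x) (Icc a b) x)
    (hp' : ∀ x ∈ Icc a b, HasDerivWithinAt p' (p'' x) (Icc a b) x)
    (hode : ∀ x ∈ Icc a b, p'' x = c x * p' x + k * p x)
    (hc : ∀ x ∈ Icc a b, |c x| ≤ M) (hpa : p a = 0) (hp'a : p' a = 0) :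
    EqOn p 0 (Icc a b) := by
  have hE : ∀ x ∈ Icc a b, HasDerivWithinAt (fun y ↦ p y ^ 2 + p' y ^ 2)
      (2 * p x * p' x + 2 * p' x * p'' x) (Icc a b) x := fun x hx ↦
    (((hp x hx).pow 2).add ((hp' x hx).pow 2)).congr_deriv (by ring)
  have hE0 := eq_zero_of_abs_deriv_le_mul_abs_self_of_eq_zero_right (K := 1 + |k| + 2 * M)
    (fun x hx ↦ (hE x hx).continuousWithinAt)
    (fun x hx ↦ (hE x (Ico_subset_Icc_self hx)).mono_of_mem_nhdsWithin (Icc_mem_nhdsGE_of_mem hx))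
    (by simp [hpa, hp'a])
    (fun x hx ↦ by
      rw [Real.norm_eq_abs, Real.norm_eq_abs, hode x (Ico_subset_Icc_self hx)]
      exact abs_energy_deriv_le (hc x (Ico_subset_Icc_self hx)))
  intro x hx
  have := hE0 x hx
  simp only [Pi.zero_apply]
  nlinarith [sq_nonneg (p x), sq_nonneg (p' x)]

end LinearODE

section Riccati

variable {a b κ : ℝ} {p p' p'' U U' : ℝ → ℝ}

theorem hasDerivWithinAt_mul_div_sq {s : Set ℝ} {x : ℝ}
    (hp : HasDerivWithinAt p (p' x) s x) (hp' : HasDerivWithinAt p' (p'' x) s x)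
    (hU : HasDerivWithinAt U (U' x) s x) (hUx : U x ≠ 0)
    (hode : p'' x = 2 * (U' x / U x) * p' x + κ ^ 2 * p x) :
    HasDerivWithinAt (fun y ↦ p y * p' y / U y ^ 2)
      ((p' x ^ 2 + κ ^ 2 * p x ^ 2) / U x ^ 2) s x := by
  refine ((hp.mul hp').div (hU.pow 2) (pow_ne_zero 2 hUx)).congr_deriv ?_
  simp only [Pi.mul_apply, Pi.pow_apply, hode]
  field_simp
  ring

variable (hp : ∀ x ∈ Icc a b, HasDerivWithinAt p (p' x) (Icc a b) x)
  (hp' : ∀ x ∈ Icc a b, HasDerivWithinAt p' (p'' x) (Icc a b) x)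
  (hU : ∀ x ∈ Icc a b, HasDerivWithinAt U (U' x) (Icc a b) x)
  (hU0 : ∀ x ∈ Icc a b, U x ≠ 0)
  (hode : ∀ x ∈ Icc a b, p'' x = 2 * (U' x / U x) * p' x + κ ^ 2 * p x)
include hp hp' hU hU0 hode

theorem monotoneOn_mul_div_sq : MonotoneOn (fun y ↦ p y * p' y / U y ^ 2) (Icc a b) := by
  have hf := fun x hx ↦ hasDerivWithinAt_mul_div_sq (hp x hx) (hp' x hx) (hU x hx) (hU0 x hx)
    (hode x hx)
  refine monotoneOn_of_hasDerivWithinAt_nonneg (convex_Icc a b)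
    (fun x hx ↦ (hf x hx).continuousWithinAt)
    (fun x hx ↦ (hf x (interior_subset hx)).mono interior_subset) (fun x _ ↦ by positivity)

theorem eqOn_zero_of_mul_deriv_nonpos (hκ : κ ≠ 0) (hU' : ContinuousOn U' (Icc a b))
    (hbc : p' a = 0) {x : ℝ} (hx : x ∈ Ioc a b) (hpx : p x * p' x ≤ 0) :
    EqOn p 0 (Icc a b) := by
  set f := fun y ↦ p y * p' y / U y ^ 2
  have hax : Icc a x ⊆ Icc a b := Icc_subset_Icc le_rfl hx.2
  have hfx : f x ≤ 0 := div_nonpos_of_nonpos_of_nonneg hpx (sq_nonneg _)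
  have hf0 : ∀ y ∈ Icc a x, f y = 0 := fun y hy ↦ by
    have hmono := monotoneOn_mul_div_sq hp hp' hU hU0 hode
    have hfa : f a = 0 := by simp [f, hbc]
    have hay : f a ≤ f y := hmono (left_mem_Icc.2 (hx.1.le.trans hx.2)) (hax hy) hy.1
    have hyx : f y ≤ f x := hmono (hax hy) (hax (right_mem_Icc.2 hx.1.le)) hy.2
    linarith
  have hleft : ∀ y ∈ Icc a x, p y = 0 ∧ p' y = 0 := fun y hy ↦ by
    have hderiv : (p' y ^ 2 + κ ^ 2 * p y ^ 2) / U y ^ 2 = 0 :=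
      (uniqueDiffOn_Icc hx.1 y hy).eq_deriv _
        ((hasDerivWithinAt_mul_div_sq (hp y (hax hy)) (hp' y (hax hy)) (hU y (hax hy))
          (hU0 y (hax hy)) (hode y (hax hy))).mono hax)
        ((hasDerivWithinAt_const y (Icc a x) 0).congr_of_mem hf0 hy)
    rw [div_eq_zero_iff, or_iff_left (pow_ne_zero 2 (hU0 y (hax hy)))] at hderiv
    have hp2 : κ ^ 2 * p y ^ 2 = 0 := by
      nlinarith [sq_nonneg (p' y), mul_nonneg (sq_nonneg κ) (sq_nonneg (p y))]
    have hp'2 : p' y ^ 2 = 0 := by linarith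
    exact ⟨pow_eq_zero_iff two_ne_zero |>.1 ((mul_eq_zero.1 hp2).resolve_left (pow_ne_zero 2 hκ)),
      pow_eq_zero_iff two_ne_zero |>.1 hp'2⟩
  have hxb : Icc x b ⊆ Icc a b := Icc_subset_Icc hx.1.le le_rfl
  obtain ⟨M, hM⟩ := isCompact_Icc.exists_bound_of_continuousOn
    (continuousOn_const.mul (hU'.div (fun y hy ↦ (hU y hy).continuousWithinAt) hU0) :
      ContinuousOn (fun y ↦ 2 * (U' y / U y)) (Icc a b))
  have hright : EqOn p 0 (Icc x b) := eqOn_zero_of_linear_ode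
    (fun y hy ↦ (hp y (hxb hy)).mono hxb) (fun y hy ↦ (hp' y (hxb hy)).mono hxb)
    (fun y hy ↦ hode y (hxb hy)) (fun y hy ↦ hM y (hxb hy))
    (hleft x (right_mem_Icc.2 hx.1.le)).1 (hleft x (right_mem_Icc.2 hx.1.le)).2
  intro y hy
  rcases le_total y x with hyx | hxy
  · exact (hleft y ⟨hy.1, hyx⟩).1
  · exact hright ⟨hxy, hy.2⟩

end Riccati

/-- A solution of `p″ − 2(U′/U)p′ − κ²p = 0` on `[−d,0]` with
`p′(−d) = 0` is either identically zero or satisfies `p·p′ > 0` on `(−d,0]`. -/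
theorem stmt_4 (d : ℝ) (hd : 0 < d) (U p : ℝ → ℝ) (κ : ℝ) (hκ : 0 < κ)
    (hU : ContDiffOn ℝ 1 U (Set.Icc (-d) 0))
    (hU0 : ∀ t ∈ Set.Icc (-d) 0, U t ≠ 0)
    (hp : ContDiffOn ℝ 2 p (Set.Icc (-d) 0))
    (hode : ∀ x ∈ Set.Icc (-d) 0,
      derivWithin (derivWithin p (Set.Icc (-d) 0)) (Set.Icc (-d) 0) x
        - 2 * (derivWithin U (Set.Icc (-d) 0) x / U x) * derivWithin p (Set.Icc (-d) 0) x
        - κ ^ 2 * p x = 0)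
    (hbc : derivWithin p (Set.Icc (-d) 0) (-d) = 0) :
    (∀ x ∈ Set.Icc (-d) 0, p x = 0) ∨
    (∀ x ∈ Set.Ioc (-d) 0, 0 < p x * derivWithin p (Set.Icc (-d) 0) x) := by
  have hs : UniqueDiffOn ℝ (Icc (-d) 0) := uniqueDiffOn_Icc (neg_neg_of_pos hd)
  have hp' : ContDiffOn ℝ 1 (derivWithin p (Icc (-d) 0)) (Icc (-d) 0) :=
    hp.derivWithin hs (by norm_num)
  have hasDeriv {f : ℝ → ℝ} (hf : ContDiffOn ℝ 1 f (Icc (-d) 0)) (x : ℝ) (hx : x ∈ Icc (-d) 0) :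
      HasDerivWithinAt f (derivWithin f (Icc (-d) 0) x) (Icc (-d) 0) x :=
    (hf.differentiableOn one_ne_zero x hx).hasDerivWithinAt
  refine or_iff_not_imp_right.2 fun hpos ↦ ?_
  push Not at hpos
  obtain ⟨x, hx, hpx⟩ := hpos
  exact eqOn_zero_of_mul_deriv_nonpos (hasDeriv (hp.of_le (by norm_num))) (hasDeriv hp')
    (hasDeriv hU) hU0 (fun x hx ↦ by linarith [hode x hx]) hκ.ne'
    (hU.continuousOn_derivWithin hs le_rfl) hbc hx hpx
end

section
/- Let d > 0, let U ∈ C¹([−d,0];ℝ) be nonvanishing, and let κ > 0. If q ∈ C¹([−d,0];ℝ) satisfies the Riccati equation q′ = 2(U′/U)q + κ² − q² on [−d,0] with q(−d) = 0, then q(x₃) > 0 for every x₃ ∈ (−d,0]. -/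
/-!
At a zero of `q` the term involving `U` drops out and the Riccati equation reads `q′ = κ² > 0`.
A function starting at `0` whose derivative is positive at each of its zeros cannot become
negative (a barrier argument), and it cannot return to `0` at a later point `x`, since `x` would
then be a minimum of `q` on `[−d, x]`, forcing `q′(x) ≤ 0`.
-/

open Set

theorem IsLocalMinOn.hasDerivWithinAt_nonpos_of_right_endpoint {f : ℝ → ℝ} {f' a b : ℝ}
    (h : IsLocalMinOn f (Icc a b) b) (hf : HasDerivWithinAt f f' (Icc a b) b) (hab : a < b) :
    f' ≤ 0 := by
  have hcone : a - b ∈ posTangentConeAt (Icc a b) b :=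
    sub_mem_posTangentConeAt_of_segment_subset (by rw [segment_symm, segment_eq_Icc hab.le])
  have : 0 ≤ (a - b) * f' := by
    simpa only [ContinuousLinearMap.smulRight_apply, one_apply_eq_self, smul_eq_mul]
      using! h.hasFDerivWithinAt_nonneg hf.hasFDerivWithinAt hcone
  exact nonpos_of_mul_nonneg_right this (sub_neg.2 hab)

theorem nonneg_of_hasDerivWithinAt_pos_at_zeros {f f' : ℝ → ℝ} {a b : ℝ}
    (hf : ∀ x ∈ Icc a b, HasDerivWithinAt f (f' x) (Icc a b) x)
    (hzero : ∀ x ∈ Icc a b, f x = 0 → 0 < f' x) (ha : 0 ≤ f a) :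
    ∀ x ∈ Icc a b, 0 ≤ f x := by
  intro x hx
  have hIci : ∀ y ∈ Ico a b, HasDerivWithinAt (-f) (-f' y) (Ici y) y := fun y hy =>
    ((hf y (Ico_subset_Icc_self hy)).mono_of_mem_nhdsWithin
      (Icc_mem_nhdsGE_of_mem hy)).neg
  have := image_le_of_deriv_right_lt_deriv_boundary' (f := -f) (B := 0) (B' := 0)
    (fun y hy => (hf y hy).continuousWithinAt.neg) hIci (by simpa using ha) continuousOn_const
    (fun y _ => hasDerivWithinAt_const _ _ _)
    (fun y hy hfy => by simpa using hzero y (Ico_subset_Icc_self hy) (by simpa using hfy)) hx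
  simpa using this

theorem pos_of_hasDerivWithinAt_pos_at_zeros {f f' : ℝ → ℝ} {a b : ℝ}
    (hf : ∀ x ∈ Icc a b, HasDerivWithinAt f (f' x) (Icc a b) x)
    (hzero : ∀ x ∈ Icc a b, f x = 0 → 0 < f' x) (ha : f a = 0) :
    ∀ x ∈ Ioc a b, 0 < f x := by
  intro x hx
  have hnonneg := nonneg_of_hasDerivWithinAt_pos_at_zeros hf hzero ha.ge
  refine (hnonneg x (Ioc_subset_Icc_self hx)).lt_of_ne' fun hfx => ?_
  have hxmem : x ∈ Icc a b := Ioc_subset_Icc_self hx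
  have hsub : Icc a x ⊆ Icc a b := Icc_subset_Icc_right hx.2
  have hmin : IsLocalMinOn f (Icc a x) x :=
    IsMinOn.localize fun y hy => by simpa [hfx] using hnonneg y (hsub hy)
  exact (hzero x hxmem hfx).not_ge
    (hmin.hasDerivWithinAt_nonpos_of_right_endpoint ((hf x hxmem).mono hsub) hx.1)

theorem stmt_6_general (d : ℝ) (U q : ℝ → ℝ) (κ : ℝ) (hκ : 0 < κ)
    (hq : ContDiffOn ℝ 1 q (Set.Icc (-d) 0))
    (hode : ∀ x ∈ Set.Icc (-d) 0,
      derivWithin q (Set.Icc (-d) 0) x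
        = 2 * (derivWithin U (Set.Icc (-d) 0) x / U x) * q x + κ ^ 2 - (q x) ^ 2)
    (hq0 : q (-d) = 0) :
    ∀ x ∈ Set.Ioc (-d) 0, 0 < q x := by
  have hderiv : ∀ x ∈ Icc (-d) 0,
      HasDerivWithinAt q (derivWithin q (Icc (-d) 0) x) (Icc (-d) 0) x := fun x hx =>
    ((hq.differentiableOn one_ne_zero) x hx).hasDerivWithinAt
  refine pos_of_hasDerivWithinAt_pos_at_zeros hderiv (fun x hx hqx => ?_) hq0
  rw [hode x hx, hqx]
  simpa using pow_pos hκ 2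

/-- The solution of the Riccati problem
`q′ = 2(U′/U)q + κ² − q²`, `q(−d) = 0`, is strictly positive on `(−d,0]`. -/
theorem stmt_6 (d : ℝ) (hd : 0 < d) (U q : ℝ → ℝ) (κ : ℝ) (hκ : 0 < κ)
    (hU : ContDiffOn ℝ 1 U (Set.Icc (-d) 0))
    (hU0 : ∀ t ∈ Set.Icc (-d) 0, U t ≠ 0)
    (hq : ContDiffOn ℝ 1 q (Set.Icc (-d) 0))
    (hode : ∀ x ∈ Set.Icc (-d) 0,
      derivWithin q (Set.Icc (-d) 0) x
        = 2 * (derivWithin U (Set.Icc (-d) 0) x / U x) * q x + κ ^ 2 - (q x) ^ 2)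
    (hq0 : q (-d) = 0) :
    ∀ x ∈ Set.Ioc (-d) 0, 0 < q x :=
  stmt_6_general d U q κ hκ hq hode hq0
end

section
/- Let d > 0 and let U ∈ C¹([−d,0];ℝ) be nonvanishing. For every κ > 0 there exists exactly one q ∈ C¹([−d,0];ℝ) satisfying the Riccati equation q′ = 2(U′/U)q + κ² − q² on all of [−d,0] with q(−d) = 0; i.e. the solution of this initial value problem does not blow up before x₃ = 0, and it is unique. -/
/-!
The substitution `q = U² p` turns the equation into `p' = κ²/U² - U² p²`. Along a solution
with `p(-d) = 0` one has `p ≥ 0`, because `p' = κ²/U² > 0` wherever `p = 0`, and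
`p(x₃) ≤ (x₃ + d) · max κ²/U²`, because `p' ≤ κ²/U²`. Truncating `p` to this range in the
quadratic term gives a globally Lipschitz, bounded equation, which Picard–Lindelöf solves on all
of `[-d, 0]` at once; by the same bounds its solution never meets the truncation. Uniqueness is
Grönwall's: two solutions are bounded, and the right-hand side is Lipschitz on bounded sets.
-/

open Set Metric
open scoped NNReal

theorem exists_forall_mem_Icc_hasDerivWithinAt_of_lipschitzWith
    {E : Type*} [NormedAddCommGroup E] [NormedSpace ℝ E] [CompleteSpace E]
    {f : ℝ → E → E} {tmin tmax : ℝ} {K L : ℝ≥0} (h : tmin ≤ tmax)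
    (hlip : ∀ t ∈ Icc tmin tmax, LipschitzWith K (f t))
    (hcont : ∀ x, ContinuousOn (f · x) (Icc tmin tmax))
    (hbound : ∀ t ∈ Icc tmin tmax, ∀ x, ‖f t x‖ ≤ L) (x₀ : E) :
    ∃ α : ℝ → E, α tmin = x₀ ∧
      ∀ t ∈ Icc tmin tmax, HasDerivWithinAt α (f t (α t)) (Icc tmin tmax) t := by
  have hpl : IsPicardLindelof f (tmin := tmin) (tmax := tmax) ⟨tmin, left_mem_Icc.2 h⟩ x₀
      (L * (tmax - tmin).toNNReal) 0 L K :=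
    { lipschitzOnWith := fun t ht => (hlip t ht).lipschitzOnWith
      continuousOn := fun x _ => hcont x
      norm_le := fun t ht x _ => hbound t ht x
      mul_max_le := by simp [max_eq_left (sub_nonneg.2 h), Real.coe_toNNReal _ (sub_nonneg.2 h)] }
  exact hpl.exists_eq_forall_mem_Icc_hasDerivWithinAt₀

theorem abs_sq_sub_sq_le {x y R : ℝ} (hx : |x| ≤ R) (hy : |y| ≤ R) :
    |x ^ 2 - y ^ 2| ≤ 2 * R * |x - y| := by
  rw [sq_sub_sq, abs_mul]
  gcongr
  linarith [abs_add_le x y]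

theorem abs_max_zero_min_le {R : ℝ} (hR : 0 ≤ R) (x : ℝ) : |max 0 (min x R)| ≤ R := by
  rw [abs_of_nonneg (le_max_left _ _)]
  exact max_le hR (min_le_right _ _)

theorem lipschitzWith_sq_max_zero_min {R : ℝ} (hR : 0 ≤ R) :
    LipschitzWith (2 * R).toNNReal (fun x : ℝ => max 0 (min x R) ^ 2) := by
  refine LipschitzWith.of_dist_le_mul fun x y => ?_
  rw [Real.coe_toNNReal _ (by positivity), Real.dist_eq, Real.dist_eq]
  calc |max 0 (min x R) ^ 2 - max 0 (min y R) ^ 2|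
      ≤ 2 * R * |max 0 (min x R) - max 0 (min y R)| :=
        abs_sq_sub_sq_le (abs_max_zero_min_le hR x) (abs_max_zero_min_le hR y)
    _ ≤ 2 * R * |x - y| := by
        refine mul_le_mul_of_nonneg_left ?_ (by positivity)
        have := ((LipschitzWith.id.min_const R).const_max 0).dist_le_mul x y
        rwa [NNReal.coe_one, one_mul, Real.dist_eq, Real.dist_eq] at this

theorem exists_hasDerivWithinAt_sub_mul_sq_max_zero_min {a b : ℝ → ℝ} {α β R : ℝ}
    (hαβ : α ≤ β) (hR : 0 ≤ R) (ha : ContinuousOn a (Icc α β)) (hb : ContinuousOn b (Icc α β)) :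
    ∃ p : ℝ → ℝ, p α = 0 ∧ ∀ t ∈ Icc α β,
      HasDerivWithinAt p (a t - b t * max 0 (min (p t) R) ^ 2) (Icc α β) t := by
  obtain ⟨Ma, hMa⟩ := isCompact_Icc.exists_bound_of_continuousOn ha
  obtain ⟨Mb, hMb⟩ := isCompact_Icc.exists_bound_of_continuousOn hb
  have hMb0 : 0 ≤ Mb := (norm_nonneg _).trans (hMb α (left_mem_Icc.2 hαβ))
  refine exists_forall_mem_Icc_hasDerivWithinAt_of_lipschitzWith
    (f := fun t x => a t - b t * max 0 (min x R) ^ 2) (K := Mb.toNNReal * (2 * R).toNNReal)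
    (L := (Ma + Mb * R ^ 2).toNNReal) hαβ
    (fun t ht => LipschitzWith.of_dist_le_mul fun x y => ?_)
    (fun x => ha.sub (hb.mul continuousOn_const)) (fun t ht x => ?_) 0
  · have hsq := (lipschitzWith_sq_max_zero_min hR).dist_le_mul x y
    rw [Real.coe_toNNReal _ (by positivity)] at hsq
    push_cast
    rw [Real.coe_toNNReal _ hMb0, Real.coe_toNNReal _ (by positivity), mul_assoc]
    calc dist (a t - b t * max 0 (min x R) ^ 2) (a t - b t * max 0 (min y R) ^ 2)
        = |b t| * dist (max 0 (min x R) ^ 2) (max 0 (min y R) ^ 2) := by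
          rw [Real.dist_eq, Real.dist_eq, ← abs_mul, abs_sub_comm]; congr 1; ring
      _ ≤ Mb * (2 * R * dist x y) := mul_le_mul (hMb t ht) hsq dist_nonneg hMb0
  · have hMa0 : 0 ≤ Ma := (norm_nonneg _).trans (hMa t ht)
    rw [Real.coe_toNNReal _ (by positivity), Real.norm_eq_abs]
    calc |a t - b t * max 0 (min x R) ^ 2| ≤ |a t| + |b t| * |max 0 (min x R)| ^ 2 := by
          rw [← abs_pow, ← abs_mul]; exact abs_sub _ _
      _ ≤ Ma + Mb * R ^ 2 := by
          gcongr
          exacts [hMa t ht, hMb t ht, abs_max_zero_min_le hR x]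

theorem exists_hasDerivWithinAt_sub_mul_sq {a b : ℝ → ℝ} {α β : ℝ} (hαβ : α ≤ β)
    (ha : ContinuousOn a (Icc α β)) (hb : ContinuousOn b (Icc α β))
    (ha_pos : ∀ t ∈ Icc α β, 0 < a t) (hb_nonneg : ∀ t ∈ Icc α β, 0 ≤ b t) :
    ∃ p : ℝ → ℝ, p α = 0 ∧
      ∀ t ∈ Icc α β, HasDerivWithinAt p (a t - b t * p t ^ 2) (Icc α β) t := by
  obtain ⟨Ma, hMa⟩ := isCompact_Icc.exists_bound_of_continuousOn ha
  have hMa0 : 0 ≤ Ma := (norm_nonneg _).trans (hMa α (left_mem_Icc.2 hαβ))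
  set R := Ma * (β - α)
  obtain ⟨p, hp0, hp⟩ := exists_hasDerivWithinAt_sub_mul_sq_max_zero_min (R := R) hαβ
    (mul_nonneg hMa0 (sub_nonneg.2 hαβ)) ha hb
  have hp' : ∀ t ∈ Ico α β, HasDerivWithinAt p (a t - b t * max 0 (min (p t) R) ^ 2) (Ici t) t :=
    fun t ht => (hp t (Ico_subset_Icc_self ht)).mono_of_mem_nhdsWithin (Icc_mem_nhdsGE_of_mem ht)
  have hpc : ContinuousOn p (Icc α β) := fun t ht => (hp t ht).continuousWithinAt
  have hnonneg : ∀ t ∈ Icc α β, 0 ≤ p t := by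
    intro t ht
    have := image_le_of_deriv_right_lt_deriv_boundary' hpc.neg (fun t ht => (hp' t ht).neg)
      (B := 0) (B' := 0) (by simp [hp0]) continuousOn_const
      (fun t _ => hasDerivWithinAt_const _ _ _) (fun t ht hpt => by
        simp [neg_eq_zero.1 hpt, ha_pos t (Ico_subset_Icc_self ht)]) ht
    simpa using this
  have hle : ∀ t ∈ Icc α β, p t ≤ R := by
    intro t ht
    have := image_le_of_deriv_right_le_deriv_boundary hpc hp' (B := fun t => Ma * (t - α))
      (B' := fun _ => Ma) (by simp [hp0]) (by fun_prop)
      (fun t _ => by simpa using ((hasDerivWithinAt_id t _).sub_const α).const_mul Ma)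
      (fun t ht => by
        have hbt := hb_nonneg t (Ico_subset_Icc_self ht)
        have hat := (Real.le_norm_self _).trans (hMa t (Ico_subset_Icc_self ht))
        nlinarith [sq_nonneg (max 0 (min (p t) R))]) ht
    exact this.trans (mul_le_mul_of_nonneg_left (by linarith [ht.2]) hMa0)
  refine ⟨p, hp0, fun t ht => ?_⟩
  have hcp : max 0 (min (p t) R) = p t := by simp [hnonneg t ht, hle t ht]
  simpa [hcp] using hp t ht

theorem lipschitzOnWith_riccati (α k R : ℝ) :
    LipschitzOnWith (2 * |α| + 2 * R).toNNReal (fun x => 2 * α * x + k - x ^ 2)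
      (closedBall 0 R) := by
  refine LipschitzOnWith.of_dist_le_mul fun x hx y hy => ?_
  rw [mem_closedBall_zero_iff, Real.norm_eq_abs] at hx hy
  have hR : 0 ≤ R := (abs_nonneg x).trans hx
  rw [Real.coe_toNNReal _ (by positivity), Real.dist_eq, Real.dist_eq]
  calc |2 * α * x + k - x ^ 2 - (2 * α * y + k - y ^ 2)|
      = |2 * α * (x - y) - (x ^ 2 - y ^ 2)| := by ring_nf
    _ ≤ |2 * α * (x - y)| + |x ^ 2 - y ^ 2| := abs_sub _ _
    _ ≤ 2 * |α| * |x - y| + 2 * R * |x - y| := by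
        gcongr
        · rw [abs_mul, abs_mul, abs_two]
        · exact abs_sq_sub_sq_le hx hy
    _ = (2 * |α| + 2 * R) * |x - y| := by ring

theorem HasDerivWithinAt.sq_mul_of_riccati {U p : ℝ → ℝ} {U' k t : ℝ} {s : Set ℝ}
    (hU : HasDerivWithinAt U U' s t) (hUt : U t ≠ 0)
    (hp : HasDerivWithinAt p (k / U t ^ 2 - U t ^ 2 * p t ^ 2) s t) :
    HasDerivWithinAt (fun x => U x ^ 2 * p x)
      (2 * (U' / U t) * (U t ^ 2 * p t) + k - (U t ^ 2 * p t) ^ 2) s t := by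
  refine ((hU.fun_pow 2).fun_mul hp).congr_deriv ?_
  field_simp
  ring

theorem contDiffOn_one_of_hasDerivWithinAt {f f' : ℝ → ℝ} {s : Set ℝ}
    (hs : UniqueDiffOn ℝ s)
    (hf : ∀ t ∈ s, HasDerivWithinAt f (f' t) s t) (hf' : ContinuousOn f' s) :
    ContDiffOn ℝ 1 f s :=
  (contDiffOn_one_iff_derivWithin hs).2
    ⟨fun t ht => (hf t ht).differentiableWithinAt,
      hf'.congr fun t ht => (hf t ht).derivWithin (hs t ht)⟩

theorem eqOn_of_hasDerivWithinAt_riccati {A f g : ℝ → ℝ} {k a b : ℝ}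
    (hA : ContinuousOn A (Icc a b))
    (hf : ∀ t ∈ Icc a b, HasDerivWithinAt f (2 * A t * f t + k - f t ^ 2) (Icc a b) t)
    (hg : ∀ t ∈ Icc a b, HasDerivWithinAt g (2 * A t * g t + k - g t ^ 2) (Icc a b) t)
    (ha : f a = g a) : EqOn f g (Icc a b) := by
  have hfc : ContinuousOn f (Icc a b) := fun t ht => (hf t ht).continuousWithinAt
  have hgc : ContinuousOn g (Icc a b) := fun t ht => (hg t ht).continuousWithinAt
  obtain ⟨MA, hMA⟩ := isCompact_Icc.exists_bound_of_continuousOn hA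
  obtain ⟨Mf, hMf⟩ := isCompact_Icc.exists_bound_of_continuousOn hfc
  obtain ⟨Mg, hMg⟩ := isCompact_Icc.exists_bound_of_continuousOn hgc
  set R := max Mf Mg
  have hv : ∀ t ∈ Ico a b, LipschitzOnWith (2 * MA + 2 * R).toNNReal
      (fun x => 2 * A t * x + k - x ^ 2) (closedBall 0 R) := fun t ht =>
    (lipschitzOnWith_riccati (A t) k R).weaken <| Real.toNNReal_le_toNNReal <| by
      linarith [hMA t (Ico_subset_Icc_self ht), Real.norm_eq_abs (A t)]
  have hderiv : ∀ {h : ℝ → ℝ},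
      (∀ t ∈ Icc a b, HasDerivWithinAt h (2 * A t * h t + k - h t ^ 2) (Icc a b) t) →
      ∀ t ∈ Ico a b, HasDerivWithinAt h (2 * A t * h t + k - h t ^ 2) (Ici t) t :=
    fun hh t ht =>
      (hh t (Ico_subset_Icc_self ht)).mono_of_mem_nhdsWithin (Icc_mem_nhdsGE_of_mem ht)
  exact ODE_solution_unique_of_mem_Icc_right (s := fun _ => closedBall 0 R) hv hfc (hderiv hf)
    (fun t ht => mem_closedBall_zero_iff.2 <| (hMf t (Ico_subset_Icc_self ht)).trans
      (le_max_left _ _))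
    hgc (hderiv hg)
    (fun t ht => mem_closedBall_zero_iff.2 <| (hMg t (Ico_subset_Icc_self ht)).trans
      (le_max_right _ _))
    ha

/-- The Riccati initial value problem `q′ = 2(U′/U)q + κ² − q²`,
`q(−d) = 0`, has exactly one solution on all of `[−d,0]`: a solution exists
(no blow-up before `x₃ = 0`) and any two solutions agree on `[−d,0]`. -/
theorem stmt_7 (d : ℝ) (hd : 0 < d) (U : ℝ → ℝ) (κ : ℝ) (hκ : 0 < κ)
    (hU : ContDiffOn ℝ 1 U (Set.Icc (-d) 0))
    (hU0 : ∀ t ∈ Set.Icc (-d) 0, U t ≠ 0) :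
    ∃ q : ℝ → ℝ,
      (ContDiffOn ℝ 1 q (Set.Icc (-d) 0) ∧
        (∀ x ∈ Set.Icc (-d) 0,
          derivWithin q (Set.Icc (-d) 0) x
            = 2 * (derivWithin U (Set.Icc (-d) 0) x / U x) * q x + κ ^ 2 - (q x) ^ 2) ∧
        q (-d) = 0) ∧
      (∀ q' : ℝ → ℝ,
        (ContDiffOn ℝ 1 q' (Set.Icc (-d) 0) ∧
          (∀ x ∈ Set.Icc (-d) 0,
            derivWithin q' (Set.Icc (-d) 0) x
              = 2 * (derivWithin U (Set.Icc (-d) 0) x / U x) * q' x + κ ^ 2 - (q' x) ^ 2) ∧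
          q' (-d) = 0) →
        ∀ x ∈ Set.Icc (-d) 0, q' x = q x) := by
  have hS : UniqueDiffOn ℝ (Icc (-d) 0) := uniqueDiffOn_Icc (by linarith)
  have hUc : ContinuousOn U (Icc (-d) 0) := hU.continuousOn
  have hA : ContinuousOn (fun t => derivWithin U (Icc (-d) 0) t / U t) (Icc (-d) 0) :=
    (hU.continuousOn_derivWithin hS le_rfl).div hUc hU0
  obtain ⟨p, hp0, hp⟩ := exists_hasDerivWithinAt_sub_mul_sq (a := fun t => κ ^ 2 / U t ^ 2)
    (b := fun t => U t ^ 2) (by linarith)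
    (continuousOn_const.div (hUc.pow 2) fun t ht => pow_ne_zero 2 (hU0 t ht)) (hUc.pow 2)
    (fun t ht => by have := hU0 t ht; positivity) (fun t _ => sq_nonneg _)
  have hq (t) (ht : t ∈ Icc (-d) 0) :=
    (hU.differentiableOn one_ne_zero t ht).hasDerivWithinAt.sq_mul_of_riccati (hU0 t ht) (hp t ht)
  have hqc : ContinuousOn (fun t => U t ^ 2 * p t) (Icc (-d) 0) :=
    fun t ht => (hq t ht).continuousWithinAt
  refine ⟨fun t => U t ^ 2 * p t,
    ⟨?_, fun t ht => (hq t ht).derivWithin (hS t ht), by simp [hp0]⟩, ?_⟩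
  · exact contDiffOn_one_of_hasDerivWithinAt hS hq (by fun_prop)
  · rintro q' ⟨hq'C, hq'eq, hq'0⟩ t ht
    refine eqOn_of_hasDerivWithinAt_riccati hA (fun t ht => ?_) hq (by simp [hq'0, hp0]) ht
    have := ((hq'C.differentiableOn one_ne_zero) t ht).hasDerivWithinAt
    rwa [hq'eq t ht] at this
end

section
/- Let d > 0, m ∈ ℝ, κ > 0, and set s = √(m² + κ²). Define l : [−d,0] → ℝ by l(x₃) = κ² tanh((x₃+d)s) / (s − m tanh((x₃+d)s)). Then the denominator s − m tanh((x₃+d)s) is strictly positive for all x₃ ∈ [−d,0], l(−d) = 0, and l satisfies the constant-coefficient Riccati equation l′ = 2m l + κ² − l² on [−d,0]. -/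
/-!
Since `|tanh| < 1` and `|m| < s`, the denominator never vanishes. The Riccati equation is then a
direct computation from `tanh' = 1 - tanh²`: with `T = tanh((x+d)s)` and `D = s - mT`, both sides
times `D²` equal `κ² s (1 - T²)`, using `s² = m² + κ²`.
-/

open Real

theorem Real.hasDerivAt_tanh (u : ℝ) : HasDerivAt tanh (1 - tanh u ^ 2) u := by
  have hcosh : cosh u ≠ 0 := (cosh_pos u).ne'
  have h := (hasDerivAt_sinh u).div (hasDerivAt_cosh u) hcosh
  have hderiv : (cosh u * cosh u - sinh u * sinh u) / cosh u ^ 2 = 1 - tanh u ^ 2 := by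
    rw [tanh_eq_sinh_div_cosh]
    field_simp
  rwa [hderiv, show sinh / cosh = tanh from funext fun y => (tanh_eq_sinh_div_cosh y).symm] at h

theorem abs_lt_sqrt_sq_add_sq (m : ℝ) {κ : ℝ} (hκ : κ ≠ 0) : |m| < √(m ^ 2 + κ ^ 2) := by
  rw [lt_sqrt (abs_nonneg m), sq_abs]
  exact lt_add_of_pos_right _ (by positivity)

theorem mul_tanh_lt_of_abs_lt {m s : ℝ} (hm : |m| < s) (u : ℝ) : m * tanh u < s :=
  calc m * tanh u ≤ |m| * |tanh u| := (le_abs_self _).trans (abs_mul _ _).le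
    _ ≤ |m| := mul_le_of_le_one_right (abs_nonneg m) (abs_tanh_lt_one u).le
    _ < s := hm

theorem hasDerivAt_riccati_of_tanh {m κ s c x : ℝ} {l : ℝ → ℝ} (hs : s ^ 2 = m ^ 2 + κ ^ 2)
    (hl : ∀ y, l y = κ ^ 2 * tanh ((y + c) * s) / (s - m * tanh ((y + c) * s)))
    (hD : s - m * tanh ((x + c) * s) ≠ 0) :
    HasDerivAt l (2 * m * l x + κ ^ 2 - l x ^ 2) x := by
  obtain rfl : l = _ := funext hl
  have htanh : HasDerivAt (fun y => tanh ((y + c) * s)) ((1 - tanh ((x + c) * s) ^ 2) * s) x := by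
    have h := (hasDerivAt_tanh _).comp x (((hasDerivAt_id' x).add_const c).mul_const s)
    rwa [one_mul] at h
  refine ((htanh.const_mul (κ ^ 2)).fun_div ((htanh.const_mul m).const_sub s) hD).congr_deriv ?_
  dsimp only
  generalize tanh ((x + c) * s) = T at hD ⊢
  -- `field_simp` writes the denominator as `s - T * m`, and only then recognises `hD`
  rw [mul_comm m T] at hD ⊢
  field_simp
  linear_combination -(κ ^ 2 * T ^ 2) * hs

theorem stmt_9_general (d m κ : ℝ) (hκ : 0 < κ)
    (s : ℝ) (hs : s = Real.sqrt (m ^ 2 + κ ^ 2))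
    (l : ℝ → ℝ)
    (hl : ∀ x : ℝ,
      l x = κ ^ 2 * Real.tanh ((x + d) * s) / (s - m * Real.tanh ((x + d) * s))) :
    (∀ x ∈ Set.Icc (-d) 0, 0 < s - m * Real.tanh ((x + d) * s)) ∧
    l (-d) = 0 ∧
    (∀ x ∈ Set.Icc (-d) 0, deriv l x = 2 * m * l x + κ ^ 2 - (l x) ^ 2) := by
  have hm : |m| < s := hs ▸ abs_lt_sqrt_sq_add_sq m hκ.ne'
  have hs2 : s ^ 2 = m ^ 2 + κ ^ 2 := by
    rw [hs, sq_sqrt (by positivity)]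
  have hD (x : ℝ) : 0 < s - m * tanh ((x + d) * s) := sub_pos.mpr (mul_tanh_lt_of_abs_lt hm _)
  refine ⟨fun x _ => hD x, by simp [hl], fun x _ => ?_⟩
  exact (hasDerivAt_riccati_of_tanh hs2 hl (hD x).ne').deriv

/-- The explicit function
`l(x₃) = κ² tanh((x₃+d)s)/(s − m tanh((x₃+d)s))`, `s = √(m²+κ²)`, has positive
denominator on `[−d,0]`, vanishes at `−d`, and solves the constant-coefficient
Riccati equation `l′ = 2ml + κ² − l²` on `[−d,0]`. -/
theorem stmt_9 (d m κ : ℝ) (hd : 0 < d) (hκ : 0 < κ)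
    (s : ℝ) (hs : s = Real.sqrt (m ^ 2 + κ ^ 2))
    (l : ℝ → ℝ)
    (hl : ∀ x : ℝ,
      l x = κ ^ 2 * Real.tanh ((x + d) * s) / (s - m * Real.tanh ((x + d) * s))) :
    (∀ x ∈ Set.Icc (-d) 0, 0 < s - m * Real.tanh ((x + d) * s)) ∧
    l (-d) = 0 ∧
    (∀ x ∈ Set.Icc (-d) 0, deriv l x = 2 * m * l x + κ ^ 2 - (l x) ^ 2) :=
  stmt_9_general d m κ hκ s hs l hl
end

section
/- Let d > 0, let U ∈ C¹([−d,0];ℝ) be nonvanishing, let κ > 0, and let q ∈ C¹([−d,0];ℝ) satisfy q′ = 2(U′/U)q + κ² − q² on [−d,0] with q(−d) = 0. Set m = inf_{x₃∈[−d,0]} U′(x₃)/U(x₃) and s = √(m² + κ²). Then q(0) ≥ κ² tanh(d s) / (s − m tanh(d s)); equivalently, q(0)/κ ≥ κ tanh(d√(m²+κ²)) / (√(m²+κ²) − m tanh(d√(m²+κ²))). -/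
/-!
Compare `q` with the solution `p` of the Riccati equation with the constant coefficient `m`
in place of `U′/U`, which is explicit:
`p(x₃) = κ² tanh(s(x₃+d)) / (s − m tanh(s(x₃+d)))`.
The difference `w = q − p` satisfies `w′ = (2U′/U − q − p) w + 2(U′/U − m) p`, and the
last term is nonnegative because `m ≤ U′/U` and `p ≥ 0`. After multiplication by the
integrating factor `exp(−∫(2U′/U − q − p))`, `w` becomes nondecreasing, so
`w(0) ≥ w(−d) = 0`.
-/

open Set

namespace Real

theorem hasDerivAt_tanh_s10 (x : ℝ) : HasDerivAt tanh (1 - tanh x ^ 2) x := by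
  have h := (hasDerivAt_sinh x).div (hasDerivAt_cosh x) (cosh_pos x).ne'
  rw [show sinh / cosh = tanh from funext fun y => (tanh_eq_sinh_div_cosh y).symm] at h
  refine h.congr_deriv ?_
  rw [tanh_eq_sinh_div_cosh]
  field_simp

theorem tanh_nonneg {x : ℝ} (hx : 0 ≤ x) : 0 ≤ tanh x := by
  rw [tanh_eq_sinh_div_cosh]
  exact div_nonneg (sinh_nonneg_iff.2 hx) (cosh_pos x).le

end Real

theorem ContinuousOn.hasDerivAt_integral_of_mem_Ioo {f : ℝ → ℝ} {a b x : ℝ}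
    (hf : ContinuousOn f (Icc a b)) (hx : x ∈ Ioo a b) :
    HasDerivAt (fun y => ∫ t in a..y, f t) (f x) x := by
  have hnhds : Icc a b ∈ nhds x := Icc_mem_nhds hx.1 hx.2
  refine intervalIntegral.integral_hasDerivAt_right ?_ ?_ (hf.continuousAt hnhds)
  · refine (hf.mono ?_).intervalIntegrable
    rw [uIcc_of_le hx.1.le]
    exact Icc_subset_Icc_right hx.2.le
  · exact ⟨Icc a b, hnhds, hf.aestronglyMeasurable measurableSet_Icc⟩

theorem DifferentiableOn.hasDerivAt_derivWithin_of_mem_Ioo {f : ℝ → ℝ} {a b x : ℝ}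
    (hf : DifferentiableOn ℝ f (Icc a b)) (hx : x ∈ Ioo a b) :
    HasDerivAt f (derivWithin f (Icc a b) x) x := by
  have hnhds : Icc a b ∈ nhds x := Icc_mem_nhds hx.1 hx.2
  rw [derivWithin_of_mem_nhds hnhds]
  exact ((hf x (Ioo_subset_Icc_self hx)).differentiableAt hnhds).hasDerivAt

theorem nonneg_of_mul_le_deriv {a b : ℝ} {c w w' : ℝ → ℝ} (hab : a ≤ b)
    (hc : ContinuousOn c (Icc a b)) (hw : ContinuousOn w (Icc a b))
    (hw' : ∀ x ∈ Ioo a b, HasDerivAt w (w' x) x) (hle : ∀ x ∈ Ioo a b, c x * w x ≤ w' x)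
    (ha : 0 ≤ w a) : 0 ≤ w b := by
  set C : ℝ → ℝ := fun y => ∫ t in a..y, c t
  have hC : ContinuousOn C (Icc a b) := by
    have hint := (hc.mono (uIcc_of_le hab).subset).integrableOn_Icc (μ := MeasureTheory.volume)
    simpa only [uIcc_of_le hab] using intervalIntegral.continuousOn_primitive_interval hint
  have hF' : ∀ x ∈ Ioo a b,
      HasDerivAt (fun y => w y * Real.exp (-C y)) ((w' x - c x * w x) * Real.exp (-C x)) x := by
    intro x hx
    have hE : HasDerivAt (fun y => Real.exp (-C y)) (Real.exp (-C x) * -c x) x :=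
      (hc.hasDerivAt_integral_of_mem_Ioo hx).neg.exp
    exact ((hw' x hx).mul hE).congr_deriv (by ring)
  have hmono : MonotoneOn (fun y => w y * Real.exp (-C y)) (Icc a b) := by
    refine monotoneOn_of_hasDerivWithinAt_nonneg
      (f' := fun x => (w' x - c x * w x) * Real.exp (-C x)) (convex_Icc a b)
      (hw.mul hC.neg.rexp) (fun x hx => ?_) (fun x hx => ?_) <;> rw [interior_Icc] at hx
    · exact (hF' x hx).hasDerivWithinAt
    · exact mul_nonneg (sub_nonneg.2 (hle x hx)) (Real.exp_pos _).le
  have key := hmono (left_mem_Icc.2 hab) (right_mem_Icc.2 hab) hab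
  simp only [C, intervalIntegral.integral_same, neg_zero, Real.exp_zero, mul_one] at key
  exact nonneg_of_mul_nonneg_left (ha.trans key) (Real.exp_pos _)

theorem riccati_comparison {a b k m : ℝ} {A p q : ℝ → ℝ} (hab : a ≤ b)
    (hA : ContinuousOn A (Icc a b)) (hp : ContinuousOn p (Icc a b))
    (hq : ContinuousOn q (Icc a b))
    (hp' : ∀ x ∈ Ioo a b, HasDerivAt p (2 * m * p x + k - p x ^ 2) x)
    (hq' : ∀ x ∈ Ioo a b, HasDerivAt q (2 * A x * q x + k - q x ^ 2) x)
    (hmA : ∀ x ∈ Ioo a b, m ≤ A x) (hp0 : ∀ x ∈ Ioo a b, 0 ≤ p x) (hpq : p a ≤ q a) :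
    p b ≤ q b := by
  have := nonneg_of_mul_le_deriv (c := fun x => 2 * A x - q x - p x) (w := fun x => q x - p x)
    hab (((continuousOn_const.mul hA).sub hq).sub hp) (hq.sub hp)
    (fun x hx => (hq' x hx).sub (hp' x hx))
    (fun x hx => by nlinarith [mul_nonneg (sub_nonneg.2 (hmA x hx)) (hp0 x hx)])
    (sub_nonneg.2 hpq)
  exact sub_nonneg.1 this

/-- The solution of `p′ = 2 m p + k − p²`, `p(0) = 0`, when `s² = m² + k`. -/
noncomputable def tanhRiccati (m s k x : ℝ) : ℝ :=
  k * Real.tanh (x * s) / (s - m * Real.tanh (x * s))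

section tanhRiccati

variable {m s k : ℝ}

theorem tanhRiccati_denom_pos (hms : |m| < s) (x : ℝ) : 0 < s - m * Real.tanh (x * s) := by
  have : |m * Real.tanh (x * s)| ≤ |m| := by
    rw [abs_mul]
    exact mul_le_of_le_one_right (abs_nonneg m) (Real.abs_tanh_lt_one _).le
  linarith [le_abs_self (m * Real.tanh (x * s))]

theorem tanhRiccati_nonneg (hk : 0 ≤ k) (hms : |m| < s) {x : ℝ} (hx : 0 ≤ x) :
    0 ≤ tanhRiccati m s k x :=
  div_nonneg (mul_nonneg hk (Real.tanh_nonneg (mul_nonneg hx ((abs_nonneg m).trans hms.le))))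
    (tanhRiccati_denom_pos hms x).le

theorem hasDerivAt_tanhRiccati (hs : s ^ 2 = m ^ 2 + k) (hms : |m| < s) (x : ℝ) :
    HasDerivAt (tanhRiccati m s k)
      (2 * m * tanhRiccati m s k x + k - tanhRiccati m s k x ^ 2) x := by
  have hT : HasDerivAt (fun y => Real.tanh (y * s)) ((1 - Real.tanh (x * s) ^ 2) * s) x := by
    exact (Real.hasDerivAt_tanh_s10 (x * s)).comp x (hasDerivAt_mul_const s)
  have hD := (tanhRiccati_denom_pos hms x).ne'
  refine ((hT.const_mul k).div ((hT.const_mul m).const_sub s) hD).congr_deriv ?_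
  simp only [tanhRiccati]
  generalize Real.tanh (x * s) = T at hD ⊢
  rw [mul_comm m T] at hD ⊢
  field_simp
  linear_combination (-(k * T ^ 2)) * hs

end tanhRiccati

/-- Lower bound for `q(0)`: with `m = inf U′/U` and `s = √(m²+κ²)`,
the Riccati solution satisfies `q(0) ≥ κ² tanh(ds)/(s − m tanh(ds))`. -/
theorem stmt_10 (d : ℝ) (hd : 0 < d) (U q : ℝ → ℝ) (κ : ℝ) (hκ : 0 < κ)
    (hU : ContDiffOn ℝ 1 U (Set.Icc (-d) 0))
    (hU0 : ∀ t ∈ Set.Icc (-d) 0, U t ≠ 0)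
    (hq : ContDiffOn ℝ 1 q (Set.Icc (-d) 0))
    (hode : ∀ x ∈ Set.Icc (-d) 0,
      derivWithin q (Set.Icc (-d) 0) x
        = 2 * (derivWithin U (Set.Icc (-d) 0) x / U x) * q x + κ ^ 2 - (q x) ^ 2)
    (hq0 : q (-d) = 0)
    (m s : ℝ)
    (hm : m = sInf ((fun x => derivWithin U (Set.Icc (-d) 0) x / U x) '' Set.Icc (-d) 0))
    (hs : s = Real.sqrt (m ^ 2 + κ ^ 2)) :
    κ ^ 2 * Real.tanh (d * s) / (s - m * Real.tanh (d * s)) ≤ q 0 := by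
  have hA : ContinuousOn (fun x => derivWithin U (Icc (-d) 0) x / U x) (Icc (-d) 0) :=
    (hU.continuousOn_derivWithin (uniqueDiffOn_Icc (neg_neg_of_pos hd)) le_rfl).div
      hU.continuousOn hU0
  have hmA : ∀ x ∈ Icc (-d) 0, m ≤ derivWithin U (Icc (-d) 0) x / U x := fun x hx =>
    hm ▸ csInf_le (isCompact_Icc.image_of_continuousOn hA).bddBelow (mem_image_of_mem _ hx)
  have hs2 : s ^ 2 = m ^ 2 + κ ^ 2 := hs ▸ Real.sq_sqrt (by positivity)
  have hms : |m| < s := by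
    rw [hs, ← Real.sqrt_sq_eq_abs]
    exact Real.sqrt_lt_sqrt (sq_nonneg m) (by linarith [pow_pos hκ 2])
  set p : ℝ → ℝ := fun x => tanhRiccati m s (κ ^ 2) (x + d)
  have hp' (x : ℝ) : HasDerivAt p (2 * m * p x + κ ^ 2 - p x ^ 2) x :=
    (hasDerivAt_tanhRiccati hs2 hms (x + d)).comp_add_const x d
  have hq' : ∀ x ∈ Ioo (-d) 0,
      HasDerivAt q (2 * (derivWithin U (Icc (-d) 0) x / U x) * q x + κ ^ 2 - q x ^ 2) x :=
    fun x hx => hode x (Ioo_subset_Icc_self hx) ▸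
      (hq.differentiableOn one_ne_zero).hasDerivAt_derivWithin_of_mem_Ioo hx
  have hpq := riccati_comparison (neg_nonpos.2 hd.le) hA
    (fun x _ => (hp' x).continuousAt.continuousWithinAt) hq.continuousOn (fun x _ => hp' x) hq'
    (fun x hx => hmA x (Ioo_subset_Icc_self hx))
    (fun x hx => tanhRiccati_nonneg (by positivity) hms (by linarith [hx.1]))
    (by simp [p, tanhRiccati, hq0])
  simpa [p, tanhRiccati] using hpq
end

section
/- Let d > 0, let U ∈ C¹([−d,0];ℝ) be nonvanishing, let κ > 0, and let q ∈ C¹([−d,0];ℝ) satisfy q′ = 2(U′/U)q + κ² − q² on [−d,0] with q(−d) = 0. Set M = sup_{x₃∈[−d,0]} U′(x₃)/U(x₃) and S = √(M² + κ²). Then q(0) ≤ κ² tanh(d S) / (S − M tanh(d S)). -/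
/-! Since `U'/U ≤ M`, wherever `q ≥ 0` it is a subsolution of the constant-coefficient Riccati
equation `y' = 2 M y + κ² - y²`, which is solved explicitly by hyperbolic functions. For `κ² + ε`
in place of `κ²` the explicit solution starting from `0` at `-d` is a strict supersolution, so `q`
can never reach it; letting `ε → 0` gives the bound, whose right-hand side is the explicit
solution at `x₃ = 0` written with `tanh`. -/

open Real Set Filter Topology

/-- The solution of `y' = 2 M y + c - y²`, `y 0 = 0`. -/
noncomputable def riccatiSol (M c t : ℝ) : ℝ :=
  c * sinh (√(M ^ 2 + c) * t) /
    (√(M ^ 2 + c) * cosh (√(M ^ 2 + c) * t) - M * sinh (√(M ^ 2 + c) * t))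

lemma abs_sinh_lt_cosh (x : ℝ) : |sinh x| < cosh x :=
  abs_lt.2 ⟨by linarith [sinh_lt_cosh (-x), sinh_neg x, cosh_neg x], sinh_lt_cosh x⟩

lemma mul_cosh_sub_mul_sinh_pos {M S : ℝ} (hMS : |M| < S) (x : ℝ) :
    0 < S * cosh x - M * sinh x := by
  have h₁ : |M * sinh x| ≤ |M| * cosh x := by
    rw [abs_mul]; exact mul_le_mul_of_nonneg_left (abs_sinh_lt_cosh x).le (abs_nonneg M)
  have h₂ : |M| * cosh x < S * cosh x := mul_lt_mul_of_pos_right hMS (cosh_pos x)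
  linarith [le_abs_self (M * sinh x)]

lemma abs_lt_sqrt_sq_add (M : ℝ) {c : ℝ} (hc : 0 < c) : |M| < √(M ^ 2 + c) := by
  rw [← sqrt_sq_eq_abs]; exact sqrt_lt_sqrt (sq_nonneg M) (by linarith)

@[simp]
lemma riccatiSol_zero (M c : ℝ) : riccatiSol M c 0 = 0 := by
  simp [riccatiSol]

lemma riccatiSol_nonneg (M : ℝ) {c t : ℝ} (hc : 0 < c) (ht : 0 ≤ t) : 0 ≤ riccatiSol M c t :=
  div_nonneg (mul_nonneg hc.le (sinh_nonneg_iff.2 (by positivity)))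
    (mul_cosh_sub_mul_sinh_pos (abs_lt_sqrt_sq_add M hc) _).le

lemma hasDerivAt_riccatiSol (M : ℝ) {c : ℝ} (hc : 0 < c) (t : ℝ) :
    HasDerivAt (riccatiSol M c) (2 * M * riccatiSol M c t + c - riccatiSol M c t ^ 2) t := by
  set S := √(M ^ 2 + c) with hSdef
  have hS : S ^ 2 = M ^ 2 + c := sq_sqrt (by positivity)
  have hD : S * cosh (S * t) - M * sinh (S * t) ≠ 0 := (mul_cosh_sub_mul_sinh_pos (abs_lt_sqrt_sq_add M hc) (S * t)).ne'
  have hlin : HasDerivAt (fun t => S * t) S t := by simpa using (hasDerivAt_id t).const_mul S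
  have hs := (hasDerivAt_sinh (S * t)).comp t hlin
  have hc' := (hasDerivAt_cosh (S * t)).comp t hlin
  refine ((hs.const_mul c).div ((hc'.const_mul S).sub (hs.const_mul M)) hD).congr_deriv ?_
  simp only [riccatiSol, ← hSdef, Function.comp_apply, Pi.sub_apply]
  field_simp
  linear_combination -sinh (S * t) ^ 2 * hS

lemma continuousAt_riccatiSol_coeff (M : ℝ) {c : ℝ} (hc : 0 < c) (t : ℝ) :
    ContinuousAt (fun c => riccatiSol M c t) c := by
  have hD := (mul_cosh_sub_mul_sinh_pos (abs_lt_sqrt_sq_add M hc) (√(M ^ 2 + c) * t)).ne'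
  unfold riccatiSol
  fun_prop (disch := exact hD)

lemma riccatiSol_eq_tanh (M : ℝ) {c : ℝ} (hc : 0 < c) (t : ℝ) :
    riccatiSol M c t =
      c * tanh (t * √(M ^ 2 + c)) / (√(M ^ 2 + c) - M * tanh (t * √(M ^ 2 + c))) := by
  have hD := mul_cosh_sub_mul_sinh_pos (abs_lt_sqrt_sq_add M hc) (√(M ^ 2 + c) * t)
  have hcosh := (cosh_pos (√(M ^ 2 + c) * t)).ne'
  rw [riccatiSol, tanh_eq_sinh_div_cosh, mul_comm t]
  field_simp

lemma le_riccatiSol_of_lt {q r : ℝ → ℝ} {a b M c c' : ℝ} (hcc' : c < c') (hc' : 0 < c')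
    (hq : ContinuousOn q (Icc a b))
    (hq' : ∀ x ∈ Ico a b, HasDerivWithinAt q (2 * r x * q x + c - q x ^ 2) (Ici x) x)
    (hr : ∀ x ∈ Ico a b, r x ≤ M) (hqa : q a ≤ 0) :
    ∀ x ∈ Icc a b, q x ≤ riccatiSol M c' (x - a) := by
  have hB (x : ℝ) : HasDerivAt (fun x => riccatiSol M c' (x - a))
      (2 * M * riccatiSol M c' (x - a) + c' - riccatiSol M c' (x - a) ^ 2) x :=
    (hasDerivAt_riccatiSol M hc' (x - a)).comp_sub_const x a
  refine image_le_of_deriv_right_lt_deriv_boundary hq hq' (by simpa) hB fun x hx hqx => ?_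
  have hqx_nonneg : 0 ≤ q x := hqx ▸ riccatiSol_nonneg M hc' (sub_nonneg.2 hx.1)
  have := mul_le_mul_of_nonneg_right (hr x hx) hqx_nonneg
  rw [hqx] at this ⊢
  linarith

lemma le_riccatiSol {q r : ℝ → ℝ} {a b M c : ℝ} (hab : a ≤ b) (hc : 0 < c)
    (hq : ContinuousOn q (Icc a b))
    (hq' : ∀ x ∈ Ico a b, HasDerivWithinAt q (2 * r x * q x + c - q x ^ 2) (Ici x) x)
    (hr : ∀ x ∈ Ico a b, r x ≤ M) (hqa : q a ≤ 0) :
    q b ≤ riccatiSol M c (b - a) := by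
  refine ge_of_tendsto ((continuousAt_riccatiSol_coeff M hc (b - a)).continuousWithinAt
    (s := Ioi c)).tendsto ?_
  filter_upwards [self_mem_nhdsWithin] with c' (hcc' : c < c')
  exact le_riccatiSol_of_lt hcc' (hc.trans hcc') hq hq' hr hqa b ⟨hab, le_rfl⟩

/-- Upper bound for `q(0)`: with `M = sup U′/U` and `S = √(M²+κ²)`,
the Riccati solution satisfies `q(0) ≤ κ² tanh(dS)/(S − M tanh(dS))`. -/
theorem stmt_11 (d : ℝ) (hd : 0 < d) (U q : ℝ → ℝ) (κ : ℝ) (hκ : 0 < κ)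
    (hU : ContDiffOn ℝ 1 U (Set.Icc (-d) 0))
    (hU0 : ∀ t ∈ Set.Icc (-d) 0, U t ≠ 0)
    (hq : ContDiffOn ℝ 1 q (Set.Icc (-d) 0))
    (hode : ∀ x ∈ Set.Icc (-d) 0,
      derivWithin q (Set.Icc (-d) 0) x
        = 2 * (derivWithin U (Set.Icc (-d) 0) x / U x) * q x + κ ^ 2 - (q x) ^ 2)
    (hq0 : q (-d) = 0)
    (M S : ℝ)
    (hM : M = sSup ((fun x => derivWithin U (Set.Icc (-d) 0) x / U x) '' Set.Icc (-d) 0))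
    (hS : S = Real.sqrt (M ^ 2 + κ ^ 2)) :
    q 0 ≤ κ ^ 2 * Real.tanh (d * S) / (S - M * Real.tanh (d * S)) := by
  set r := fun x => derivWithin U (Icc (-d) 0) x / U x
  have hr : ContinuousOn r (Icc (-d) 0) :=
    (hU.continuousOn_derivWithin (uniqueDiffOn_Icc (neg_lt_zero.2 hd)) le_rfl).div
      hU.continuousOn hU0
  have hrM : ∀ x ∈ Ico (-d) 0, r x ≤ M := fun x hx =>
    hM ▸ le_csSup (isCompact_Icc.bddAbove_image hr) (mem_image_of_mem r (Ico_subset_Icc_self hx))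
  have hq' : ∀ x ∈ Ico (-d) 0,
      HasDerivWithinAt q (2 * r x * q x + κ ^ 2 - q x ^ 2) (Ici x) x := fun x hx => by
    rw [← hode x (Ico_subset_Icc_self hx)]
    exact (hq.differentiableOn one_ne_zero x (Ico_subset_Icc_self hx)).hasDerivWithinAt
      |>.mono_of_mem_nhdsWithin (Icc_mem_nhdsGE_of_mem hx)
  have hκ2 : 0 < κ ^ 2 := by positivity
  have := le_riccatiSol (neg_nonpos.2 hd.le) hκ2 hq.continuousOn hq' hrM hq0.le
  rwa [sub_neg_eq_add, zero_add, riccatiSol_eq_tanh M hκ2, ← hS] at this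
end

section
/- Let d > 0 and let U ∈ C¹([−d,0];ℝ) be nonvanishing. For each κ > 0 let q_κ ∈ C¹([−d,0];ℝ) be the solution of q_κ′ = 2(U′/U)q_κ + κ² − q_κ² on [−d,0] with q_κ(−d) = 0. Then lim_{κ→∞} q_κ(0)/κ = 1. -/
/-!
Write the equation as `q' = h q + κ² - q²` with `|h| ≤ M` on `[-d, 0]`. Since `q` cannot cross a
barrier against which the right-hand side points inward, the constant `κ + M + 1` bounds `q_κ` from
above, and for large `κ` the chord from `(-d, 0)` to `(0, κ - c)` bounds it from below, with
`c = M + 1/d + 1` independent of `κ`. Hence `|q_κ(0) - κ| ≤ c` and `q_κ(0)/κ → 1`.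
-/

open Set Filter Topology

section Riccati

variable {a b M κ : ℝ} {h q : ℝ → ℝ}

theorem riccati_le_add (hκ : 0 ≤ κ) (hM : 0 ≤ M) (hq : ContinuousOn q (Icc a b))
    (hq' : ∀ x ∈ Ico a b, HasDerivWithinAt q (h x * q x + κ ^ 2 - q x ^ 2) (Ici x) x)
    (hqa : q a = 0) (hh : ∀ x ∈ Ico a b, |h x| ≤ M) :
    ∀ x ∈ Icc a b, q x ≤ κ + M + 1 := by
  refine image_le_of_deriv_right_lt_deriv_boundary hq hq' (by rw [hqa]; positivity)
    (fun _ ↦ hasDerivAt_const _ _) fun x hx hqx ↦ ?_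
  have hhq : h x * q x ≤ M * q x := by
    rw [hqx]
    exact mul_le_mul_of_nonneg_right ((le_abs_self _).trans (hh x hx)) (by positivity)
  rw [hqx] at hhq ⊢
  nlinarith

/- The barrier is the chord from `(a, 0)` to `(b, κ - c)`: where `q` touches it, the right-hand
side of the equation is at least `c κ`, which beats the slope `(κ - c) / (b - a)`. -/
theorem sub_le_riccati {c : ℝ} (hab : a < b) (hMc : M ≤ c) (hc : (b - a)⁻¹ < c) (hcκ : c ≤ κ)
    (hq : ContinuousOn q (Icc a b))
    (hq' : ∀ x ∈ Ico a b, HasDerivWithinAt q (h x * q x + κ ^ 2 - q x ^ 2) (Ici x) x)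
    (hqa : q a = 0) (hh : ∀ x ∈ Ico a b, |h x| ≤ M) :
    κ - c ≤ q b := by
  set s := (κ - c) / (b - a)
  have hba : 0 < b - a := sub_pos.2 hab
  have hs : 0 ≤ s := div_nonneg (sub_nonneg.2 hcκ) hba.le
  have hbarrier := image_le_of_deriv_right_lt_deriv_boundary' (f := fun x ↦ s * (x - a))
    (by fun_prop)
    (fun x _ ↦ (((hasDerivAt_id x).sub_const a).const_mul s).hasDerivWithinAt.congr_deriv
      (mul_one s))
    (by simp [hqa]) hq hq' ?_ (right_mem_Icc.2 hab.le)
  · simpa [s, div_mul_cancel₀ _ hba.ne'] using hbarrier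
  intro x hx hqx
  have hq0 : 0 ≤ q x := hqx ▸ mul_nonneg hs (sub_nonneg.2 hx.1)
  have hqκ : q x ≤ κ - c := by
    rw [← hqx, div_mul_comm]
    exact mul_le_of_le_one_left (sub_nonneg.2 hcκ) ((div_le_one hba).2 (by linarith [hx.2]))
  have hhq : -(M * q x) ≤ h x * q x := by
    rw [neg_le, ← neg_mul]
    exact mul_le_mul_of_nonneg_right (neg_le.1 (abs_le.1 (hh x hx)).1) hq0
  have hc0 : 0 < c := (inv_pos.2 hba).trans hc
  have hslope : s < c * κ := by
    calc s = (κ - c) * (b - a)⁻¹ := div_eq_mul_inv _ _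
      _ ≤ κ * (b - a)⁻¹ := by gcongr; linarith
      _ < κ * c := by gcongr; linarith
      _ = c * κ := mul_comm _ _
  have hgap : c * (κ + q x) ≤ (κ - q x) * (κ + q x) :=
    mul_le_mul_of_nonneg_right (by linarith) (by linarith)
  nlinarith [mul_nonneg (sub_nonneg.2 hMc) hq0]

theorem abs_riccati_sub_le (hab : a < b) (hcκ : M + (b - a)⁻¹ + 1 ≤ κ)
    (hq : ContinuousOn q (Icc a b))
    (hq' : ∀ x ∈ Ico a b, HasDerivWithinAt q (h x * q x + κ ^ 2 - q x ^ 2) (Ici x) x)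
    (hqa : q a = 0) (hh : ∀ x ∈ Ico a b, |h x| ≤ M) :
    |q b - κ| ≤ M + (b - a)⁻¹ + 1 := by
  have hM : 0 ≤ M := (abs_nonneg _).trans (hh a (left_mem_Ico.2 hab))
  have hba : 0 < (b - a)⁻¹ := inv_pos.2 (sub_pos.2 hab)
  have hupper := riccati_le_add (by linarith) hM hq hq' hqa hh b (right_mem_Icc.2 hab.le)
  have hlower := sub_le_riccati hab (by linarith) (by linarith) hcκ hq hq' hqa hh
  rw [abs_le]
  constructor <;> linarith

end Riccati

theorem tendsto_div_self_of_abs_sub_le {f : ℝ → ℝ} {C : ℝ}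
    (hf : ∀ᶠ κ in atTop, |f κ - κ| ≤ C) : Tendsto (fun κ ↦ f κ / κ) atTop (𝓝 1) := by
  have hlim : ∀ C' : ℝ, Tendsto (fun κ : ℝ ↦ 1 + C' / κ) atTop (𝓝 1) := fun C' ↦ by
    simpa using (tendsto_const_nhds (x := (1 : ℝ))).add
      ((tendsto_const_nhds (x := C')).div_atTop tendsto_id)
  refine tendsto_of_tendsto_of_tendsto_of_le_of_le' (hlim (-C)) (hlim C) ?_ ?_ <;>
  filter_upwards [hf, eventually_gt_atTop 0] with κ hfκ hκ <;>
  rw [abs_le] at hfκ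
  · rw [neg_div, ← sub_eq_add_neg, le_div_iff₀ hκ, sub_mul, div_mul_cancel₀ _ hκ.ne']
    linarith
  · rw [div_le_iff₀ hκ, add_mul, div_mul_cancel₀ _ hκ.ne']
    linarith

theorem DifferentiableOn.hasDerivWithinAt_Ici_of_Icc {f : ℝ → ℝ} {a b x : ℝ}
    (hf : DifferentiableOn ℝ f (Icc a b)) (hx : x ∈ Ico a b) :
    HasDerivWithinAt f (derivWithin f (Icc a b) x) (Ici x) x :=
  (hf x (Ico_subset_Icc_self hx)).hasDerivWithinAt.mono_of_mem_nhdsWithin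
    (Icc_mem_nhdsGE_of_mem hx)

/-- For the family `q_κ` of solutions of the Riccati problems
`q_κ′ = 2(U′/U)q_κ + κ² − q_κ²`, `q_κ(−d) = 0`, one has `lim_{κ→∞} q_κ(0)/κ = 1`. -/
theorem stmt_12 (d : ℝ) (hd : 0 < d) (U : ℝ → ℝ)
    (hU : ContDiffOn ℝ 1 U (Set.Icc (-d) 0))
    (hU0 : ∀ t ∈ Set.Icc (-d) 0, U t ≠ 0)
    (q : ℝ → ℝ → ℝ)
    (hq : ∀ κ : ℝ, 0 < κ →
      ContDiffOn ℝ 1 (q κ) (Set.Icc (-d) 0) ∧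
      (∀ x ∈ Set.Icc (-d) 0,
        derivWithin (q κ) (Set.Icc (-d) 0) x
          = 2 * (derivWithin U (Set.Icc (-d) 0) x / U x) * q κ x + κ ^ 2 - (q κ x) ^ 2) ∧
      q κ (-d) = 0) :
    Filter.Tendsto (fun κ : ℝ => q κ 0 / κ) Filter.atTop (nhds 1) := by
  have hd' : -d < 0 := neg_neg_of_pos hd
  set h := fun x ↦ 2 * (derivWithin U (Icc (-d) 0) x / U x)
  have hh : ContinuousOn h (Icc (-d) 0) := continuousOn_const.mul
    ((hU.continuousOn_derivWithin (uniqueDiffOn_Icc hd') le_rfl).div hU.continuousOn hU0)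
  obtain ⟨M, hM⟩ := isCompact_Icc.exists_bound_of_continuousOn hh
  refine tendsto_div_self_of_abs_sub_le (C := M + (0 - -d)⁻¹ + 1) ?_
  filter_upwards [eventually_ge_atTop (M + (0 - -d)⁻¹ + 1)] with κ hκ
  have hκ0 : 0 < κ := by
    have hM0 := (norm_nonneg _).trans (hM (-d) (left_mem_Icc.2 hd'.le))
    have hd_inv := inv_pos.2 (sub_pos.2 hd')
    linarith
  obtain ⟨hreg, hode, hinit⟩ := hq κ hκ0
  refine abs_riccati_sub_le hd' hκ hreg.continuousOn (fun x hx ↦ ?_) hinit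
    (fun x hx ↦ hM x (Ico_subset_Icc_self hx))
  rw [← hode x (Ico_subset_Icc_self hx)]
  exact (hreg.differentiableOn one_ne_zero).hasDerivWithinAt_Ici_of_Icc hx
end

section
/- Let d > 0, let U ∈ C¹([−d,0];ℝ) be nonvanishing, and let 0 < κ_a < κ_b. Let q_a, q_b ∈ C¹([−d,0];ℝ) satisfy q_a′ = 2(U′/U)q_a + κ_a² − q_a² and q_b′ = 2(U′/U)q_b + κ_b² − q_b² on [−d,0], both with initial condition q(−d) = 0. Then q_a(x₃) < q_b(x₃) for every x₃ ∈ (−d,0]; in particular q_a(0) < q_b(0), i.e. the value q_κ(0) is strictly increasing in κ². -/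
/-! The difference `f = q_b - q_a` vanishes at `-d`, and wherever it vanishes the `U`- and
`q²`-terms of the two equations cancel, leaving `f' = κ_b² - κ_a² > 0`. A function whose
derivative is positive at each of its zeros stays nonnegative (fencing theorem), and it cannot
vanish again at some `x > -d`: `x` would then minimize `f` on `[-d, x]`, forcing `f'(x) ≤ 0`. -/

open Set

lemma IsMinOn.hasDerivWithinAt_Icc_nonpos {f : ℝ → ℝ} {f' a b x : ℝ}
    (hmin : IsMinOn f (Icc a b) x) (hf : HasDerivWithinAt f f' (Icc a b) x)
    (hax : a < x) (hxb : x ≤ b) : f' ≤ 0 := by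
  have hcone : a - x ∈ posTangentConeAt (Icc a b) x :=
    sub_mem_posTangentConeAt_of_segment_subset <|
      ((segment_symm ℝ x a).trans (segment_eq_Icc hax.le)).trans_subset
        (Icc_subset_Icc_right hxb)
  have h := hmin.localize.hasFDerivWithinAt_nonneg hf.hasFDerivWithinAt hcone
  simp only [ContinuousLinearMap.toSpanSingleton_apply, smul_eq_mul] at h
  exact nonpos_of_mul_nonneg_right h (sub_neg.2 hax)

theorem pos_of_hasDerivWithinAt_pos_of_eq_zero {f f' : ℝ → ℝ} {a b : ℝ}
    (hf : ∀ x ∈ Icc a b, HasDerivWithinAt f (f' x) (Icc a b) x) (ha : 0 ≤ f a)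
    (hzero : ∀ x ∈ Icc a b, f x = 0 → 0 < f' x) : ∀ x ∈ Ioc a b, 0 < f x := by
  have hnonneg : ∀ x ∈ Icc a b, 0 ≤ f x :=
    image_le_of_deriv_right_lt_deriv_boundary' (f' := 0) continuousOn_const
      (fun x _ => hasDerivWithinAt_const x _ 0) ha
      (fun x hx => (hf x hx).continuousWithinAt)
      (fun x hx => (hf x (Ico_subset_Icc_self hx)).mono_of_mem_nhdsWithin
        (Icc_mem_nhdsGE_of_mem hx))
      (fun x hx h => hzero x (Ico_subset_Icc_self hx) h.symm)
  intro x hx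
  have hxI : x ∈ Icc a b := Ioc_subset_Icc_self hx
  refine (hnonneg x hxI).lt_of_ne fun h => ?_
  have hmin : IsMinOn f (Icc a b) x := fun y hy => by simpa [← h] using hnonneg y hy
  exact (hzero x hxI h.symm).not_ge (hmin.hasDerivWithinAt_Icc_nonpos (hf x hxI) hx.1 hx.2)

theorem stmt_13_general (d : ℝ) (U qa qb : ℝ → ℝ) (κa κb : ℝ)
    (hκa : 0 < κa) (hκab : κa < κb)
    (hqa : ContDiffOn ℝ 1 qa (Set.Icc (-d) 0))
    (hqb : ContDiffOn ℝ 1 qb (Set.Icc (-d) 0))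
    (hodea : ∀ x ∈ Set.Icc (-d) 0,
      derivWithin qa (Set.Icc (-d) 0) x
        = 2 * (derivWithin U (Set.Icc (-d) 0) x / U x) * qa x + κa ^ 2 - (qa x) ^ 2)
    (hodeb : ∀ x ∈ Set.Icc (-d) 0,
      derivWithin qb (Set.Icc (-d) 0) x
        = 2 * (derivWithin U (Set.Icc (-d) 0) x / U x) * qb x + κb ^ 2 - (qb x) ^ 2)
    (hqa0 : qa (-d) = 0) (hqb0 : qb (-d) = 0) :
    ∀ x ∈ Set.Ioc (-d) 0, qa x < qb x := by
  have hderiv : ∀ x ∈ Icc (-d) 0, HasDerivWithinAt (fun t => qb t - qa t)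
      (derivWithin qb (Icc (-d) 0) x - derivWithin qa (Icc (-d) 0) x) (Icc (-d) 0) x :=
    fun x hx => ((hqb.differentiableOn one_ne_zero x hx).hasDerivWithinAt).sub
      ((hqa.differentiableOn one_ne_zero x hx).hasDerivWithinAt)
  have hcross : ∀ x ∈ Icc (-d) 0, qb x - qa x = 0 →
      0 < derivWithin qb (Icc (-d) 0) x - derivWithin qa (Icc (-d) 0) x := by
    intro x hx hmeet
    rw [hodea x hx, hodeb x hx, sub_eq_zero.1 hmeet]
    nlinarith
  intro x hx
  simpa using pos_of_hasDerivWithinAt_pos_of_eq_zero hderiv (by simp [hqa0, hqb0]) hcross x hx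

/-- Strict monotonicity of the Riccati solution in `κ²`: if
`0 < κ_a < κ_b` then the corresponding solutions satisfy `q_a < q_b` on `(−d,0]`. -/
theorem stmt_13 (d : ℝ) (hd : 0 < d) (U qa qb : ℝ → ℝ) (κa κb : ℝ)
    (hκa : 0 < κa) (hκab : κa < κb)
    (hU : ContDiffOn ℝ 1 U (Set.Icc (-d) 0))
    (hU0 : ∀ t ∈ Set.Icc (-d) 0, U t ≠ 0)
    (hqa : ContDiffOn ℝ 1 qa (Set.Icc (-d) 0))
    (hqb : ContDiffOn ℝ 1 qb (Set.Icc (-d) 0))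
    (hodea : ∀ x ∈ Set.Icc (-d) 0,
      derivWithin qa (Set.Icc (-d) 0) x
        = 2 * (derivWithin U (Set.Icc (-d) 0) x / U x) * qa x + κa ^ 2 - (qa x) ^ 2)
    (hodeb : ∀ x ∈ Set.Icc (-d) 0,
      derivWithin qb (Set.Icc (-d) 0) x
        = 2 * (derivWithin U (Set.Icc (-d) 0) x / U x) * qb x + κb ^ 2 - (qb x) ^ 2)
    (hqa0 : qa (-d) = 0) (hqb0 : qb (-d) = 0) :
    ∀ x ∈ Set.Ioc (-d) 0, qa x < qb x :=
  stmt_13_general d U qa qb κa κb hκa hκab hqa hqb hodea hodeb hqa0 hqb0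
end

section
/- Let d, g, σ > 0, let U ∈ C¹([−d,0];ℝ) be nonvanishing, and let λ₁, λ₂ > 0 with dual lattice Λ* = (2π/λ₁)ℤ × (2π/λ₂)ℤ. For each k = (k₁,k₂) ∈ Λ*∖{0} let q_k ∈ C¹([−d,0];ℝ) be the solution of q_k′ = 2(U′/U)q_k + |k|² − q_k² on [−d,0] with q_k(−d) = 0, where |k|² = k₁² + k₂². Then the set N(U) = { k ∈ Λ*∖{0} : q_k(0)·(g + σ|k|²) = k₁² U(0)² } is finite, and every k ∈ N(U) satisfies k₁ ≠ 0. -/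
/-!
The substitution `p = q / U²` removes the linear term of the Riccati equation:
`p' = κ² / U² - U² p²`, so with `M = max U²` we get `p' ≥ κ² / M - M p²`. Since `p (-d) = 0`,
the line `α (x + d)` is a lower barrier for `p` as soon as `α + M (α d)² < κ² / M`; taking
`α = min (κ² / 2M) (κ / 2Md)` gives `q_k(0) / U(0)² ≥ min (κ² d / 2M) (κ / 2M) > 0`.
On the other hand the dispersion relation forces `q_k(0) / U(0)² ≤ 1 / σ`, so `|k|` is bounded
on `N(U)`, which is therefore a finite set of lattice points; and `q_k(0) > 0` rules out `k₁ = 0`.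
-/

open Set Metric Bornology

theorem finite_inter_zmultiples (a : ℝ) {K : Set ℝ} (hK : IsBounded K) :
    (K ∩ AddSubgroup.zmultiples a).Finite :=
  finite_isBounded_inter_isClosed (SetLike.isDiscrete_iff_discreteTopology.mpr inferInstance) hK
    AddSubgroup.isClosed_of_discrete

theorem finite_setOf_lattice_sq_add_sq_le (a b C : ℝ) :
    {k : ℝ × ℝ | (∃ m n : ℤ, k = (a * m, b * n)) ∧ k.1 ^ 2 + k.2 ^ 2 ≤ C}.Finite := by
  refine ((finite_inter_zmultiples a (isBounded_Icc (-√C) √C)).prod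
    (finite_inter_zmultiples b (isBounded_Icc (-√C) √C))).subset ?_
  rintro k ⟨⟨m, n, rfl⟩, hk⟩
  refine ⟨⟨abs_le.1 (Real.abs_le_sqrt ?_), m, by simp [mul_comm]⟩,
    ⟨abs_le.1 (Real.abs_le_sqrt ?_), n, by simp [mul_comm]⟩⟩ <;>
  nlinarith [sq_nonneg (a * m), sq_nonneg (b * n)]

theorem fst_sq_add_snd_sq_pos {k : ℝ × ℝ} (hk : k ≠ 0) : 0 < k.1 ^ 2 + k.2 ^ 2 := by
  have : k.1 ≠ 0 ∨ k.2 ≠ 0 := by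
    contrapose! hk
    exact Prod.ext hk.1 hk.2
  rcases this with h | h <;> positivity

theorem HasDerivWithinAt.div_sq_of_riccati {q U : ℝ → ℝ} {q' U' κ2 x : ℝ} {s : Set ℝ}
    (hq : HasDerivWithinAt q q' s x) (hU : HasDerivWithinAt U U' s x) (hUx : U x ≠ 0)
    (hode : q' = 2 * (U' / U x) * q x + κ2 - q x ^ 2) :
    HasDerivWithinAt (fun y => q y / U y ^ 2)
      (κ2 / U x ^ 2 - U x ^ 2 * (q x / U x ^ 2) ^ 2) s x := by
  refine (hq.div (hU.fun_pow 2) (pow_ne_zero 2 hUx)).congr_deriv ?_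
  rw [hode]
  field_simp
  ring

theorem linear_le_of_deriv_ge_sub_mul_sq {p p' : ℝ → ℝ} {a b A B α : ℝ}
    (hp : ContinuousOn p (Icc a b)) (hp' : ∀ x ∈ Ico a b, HasDerivWithinAt p (p' x) (Ici x) x)
    (ha : 0 ≤ p a) (hB : 0 ≤ B) (hp'ge : ∀ x ∈ Ico a b, A - B * p x ^ 2 ≤ p' x)
    (hα : α + B * (α * (b - a)) ^ 2 < A) : ∀ x ∈ Icc a b, α * (x - a) ≤ p x := by
  have barrier := image_le_of_deriv_right_lt_deriv_boundary' (f := fun x => -p x)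
    (B := fun x => -(α * (x - a))) hp.neg (fun x hx => (hp' x hx).neg) (by simpa using ha)
    (by fun_prop) (fun x _ => ((hasDerivWithinAt_id x _).sub_const a |>.const_mul α).neg) ?_
  · intro x hx
    simpa using barrier hx
  intro x hx hpx
  have hsq : (α * (x - a)) ^ 2 ≤ (α * (b - a)) ^ 2 := by
    rw [mul_pow, mul_pow]
    exact mul_le_mul_of_nonneg_left
      (pow_le_pow_left₀ (sub_nonneg.2 hx.1) (by linarith [hx.2]) 2) (sq_nonneg α)
  have hp'x := hp'ge x hx
  rw [neg_inj.1 hpx] at hp'x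
  nlinarith [mul_le_mul_of_nonneg_left hsq hB]

theorem riccati_lower_bound {d M κ2 : ℝ} {U q : ℝ → ℝ} (hd : 0 < d) (hκ2 : 0 < κ2)
    (hU : ContDiffOn ℝ 1 U (Icc (-d) 0)) (hU0 : ∀ t ∈ Icc (-d) 0, U t ≠ 0)
    (hM : ∀ t ∈ Icc (-d) 0, U t ^ 2 ≤ M) (hq : ContDiffOn ℝ 1 q (Icc (-d) 0))
    (hode : ∀ x ∈ Icc (-d) 0, derivWithin q (Icc (-d) 0) x
      = 2 * (derivWithin U (Icc (-d) 0) x / U x) * q x + κ2 - q x ^ 2)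
    (hqd : q (-d) = 0) :
    min (κ2 * d / (2 * M)) (√κ2 / (2 * M)) ≤ q 0 / U 0 ^ 2 := by
  have mem0 : (0 : ℝ) ∈ Icc (-d) 0 := ⟨by linarith, le_rfl⟩
  have hMpos : 0 < M := (pow_two_pos_of_ne_zero (hU0 0 mem0)).trans_le (hM 0 mem0)
  have hderiv : ∀ x ∈ Icc (-d) 0, HasDerivWithinAt (fun y => q y / U y ^ 2)
      (κ2 / U x ^ 2 - U x ^ 2 * (q x / U x ^ 2) ^ 2) (Icc (-d) 0) x := fun x hx =>
    ((hq.differentiableOn one_ne_zero x hx).hasDerivWithinAt).div_sq_of_riccati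
      (hU.differentiableOn one_ne_zero x hx).hasDerivWithinAt (hU0 x hx) (hode x hx)
  set α := min (κ2 / (2 * M)) (√κ2 / (2 * M * d))
  have hαd : α * d = min (κ2 * d / (2 * M)) (√κ2 / (2 * M)) := by
    rw [min_mul_of_nonneg _ _ hd.le]
    congr 1 <;> field_simp
  have hα : α + M * (α * (0 - -d)) ^ 2 < κ2 / M := by
    have h1 : α * (2 * M) ≤ κ2 := (le_div_iff₀ (by positivity)).1 (min_le_left _ _)
    have h2 : M * (α * d) ≤ √κ2 / 2 := by
      rw [hαd, mul_min_of_nonneg _ _ hMpos.le]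
      exact (min_le_right _ _).trans_eq (by field_simp)
    have h3 : M * (M * (α * d) ^ 2) ≤ κ2 / 4 := by
      have : 0 ≤ M * (α * d) := by positivity
      nlinarith [Real.sq_sqrt hκ2.le]
    rw [zero_sub, neg_neg, lt_div_iff₀ hMpos]
    linarith
  have hbarrier := linear_le_of_deriv_ge_sub_mul_sq (A := κ2 / M) (B := M)
    (fun x hx => (hderiv x hx).continuousWithinAt)
    (fun x hx => (hderiv x (Ico_subset_Icc_self hx)).mono_of_mem_nhdsWithin
      (Filter.mem_of_superset (Icc_mem_nhdsGE hx.2) (Icc_subset_Icc_left hx.1)))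
    (by simp [hqd]) hMpos.le ?_ hα 0 mem0
  · rwa [zero_sub, neg_neg, hαd] at hbarrier
  intro x hx
  have hUx : 0 < U x ^ 2 := pow_two_pos_of_ne_zero (hU0 x (Ico_subset_Icc_self hx))
  have hUM := hM x (Ico_subset_Icc_self hx)
  gcongr ?_ - ?_
  · exact div_le_div_of_nonneg_left hκ2.le hUx hUM
  · exact mul_le_mul_of_nonneg_right hUM (sq_nonneg _)

theorem sq_add_sq_le_of_dispersion {d g σ M u q₀ k₁ k₂ : ℝ} (hd : 0 < d) (hg : 0 ≤ g)
    (hσ : 0 < σ) (hM : 0 < M) (hu : 0 < u) (hκ : 0 < k₁ ^ 2 + k₂ ^ 2) (hq₀ : 0 ≤ q₀)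
    (hlower : min ((k₁ ^ 2 + k₂ ^ 2) * d / (2 * M)) (√(k₁ ^ 2 + k₂ ^ 2) / (2 * M)) ≤ q₀ / u)
    (hdisp : q₀ * (g + σ * (k₁ ^ 2 + k₂ ^ 2)) = k₁ ^ 2 * u) :
    k₁ ^ 2 + k₂ ^ 2 ≤ max (2 * M / (σ * d)) ((2 * M / σ) ^ 2) := by
  have hupper : q₀ / u ≤ 1 / σ := by
    rw [div_le_div_iff₀ hu hσ, one_mul]
    refine le_of_mul_le_mul_right ?_ hκ
    nlinarith [sq_nonneg k₂, mul_nonneg hq₀ hg]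
  rcases min_le_iff.1 (hlower.trans hupper) with h | h
  · rw [div_le_div_iff₀ (by positivity) hσ] at h
    exact le_max_of_le_left ((le_div_iff₀ (by positivity)).2 (by linarith))
  · rw [div_le_div_iff₀ (by positivity) hσ, one_mul, ← le_div_iff₀ hσ] at h
    exact le_max_of_le_right ((Real.sqrt_le_left (by positivity)).1 h)

theorem stmt_14_general (d g σ lam1 lam2 : ℝ) (hd : 0 < d) (hg : 0 < g) (hσ : 0 < σ)
    (U : ℝ → ℝ)
    (hU : ContDiffOn ℝ 1 U (Set.Icc (-d) 0))
    (hU0 : ∀ t ∈ Set.Icc (-d) 0, U t ≠ 0)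
    (Λstar : Set (ℝ × ℝ))
    (hΛ : Λstar = {k : ℝ × ℝ | ∃ m n : ℤ,
      k = ((2 * Real.pi / lam1) * (m : ℝ), (2 * Real.pi / lam2) * (n : ℝ))})
    (q : ℝ × ℝ → ℝ → ℝ)
    (hq : ∀ k ∈ Λstar, k ≠ (0 : ℝ × ℝ) →
      ContDiffOn ℝ 1 (q k) (Set.Icc (-d) 0) ∧
      (∀ x ∈ Set.Icc (-d) 0,
        derivWithin (q k) (Set.Icc (-d) 0) x
          = 2 * (derivWithin U (Set.Icc (-d) 0) x / U x) * q k x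
            + (k.1 ^ 2 + k.2 ^ 2) - (q k x) ^ 2) ∧
      q k (-d) = 0)
    (N : Set (ℝ × ℝ))
    (hN : N = {k : ℝ × ℝ | k ∈ Λstar ∧ k ≠ 0 ∧
      q k 0 * (g + σ * (k.1 ^ 2 + k.2 ^ 2)) = k.1 ^ 2 * (U 0) ^ 2}) :
    N.Finite ∧ ∀ k ∈ N, k.1 ≠ 0 := by
  have mem0 : (0 : ℝ) ∈ Icc (-d) 0 := ⟨by linarith, le_rfl⟩
  have hU02 : 0 < U 0 ^ 2 := pow_two_pos_of_ne_zero (hU0 0 mem0)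
  obtain ⟨x₀, -, hx₀⟩ := isCompact_Icc.exists_isMaxOn ⟨0, mem0⟩ (hU.continuousOn.pow 2)
  have hMpos : 0 < U x₀ ^ 2 := hU02.trans_le (hx₀ mem0)
  have hlower : ∀ k ∈ N, min ((k.1 ^ 2 + k.2 ^ 2) * d / (2 * U x₀ ^ 2))
      (√(k.1 ^ 2 + k.2 ^ 2) / (2 * U x₀ ^ 2)) ≤ q k 0 / U 0 ^ 2 := by
    intro k hk
    obtain ⟨hkΛ, hk0, -⟩ := hN ▸ hk
    obtain ⟨hqk, hode, hqd⟩ := hq k hkΛ hk0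
    exact riccati_lower_bound hd (fst_sq_add_snd_sq_pos hk0) hU hU0 (fun t ht => hx₀ ht)
      hqk hode hqd
  have hpos : ∀ k ∈ N, 0 < q k 0 := fun k hk =>
    have := fst_sq_add_snd_sq_pos (hN ▸ hk).2.1
    (div_pos_iff_of_pos_right hU02).1 (lt_of_lt_of_le (by positivity) (hlower k hk))
  refine ⟨?_, fun k hk hk1 => ?_⟩
  · refine (finite_setOf_lattice_sq_add_sq_le (2 * Real.pi / lam1) (2 * Real.pi / lam2)
      (max (2 * U x₀ ^ 2 / (σ * d)) ((2 * U x₀ ^ 2 / σ) ^ 2))).subset fun k hk => ?_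
    obtain ⟨hkΛ, hk0, hdisp⟩ := hN ▸ hk
    exact ⟨by rwa [hΛ] at hkΛ, sq_add_sq_le_of_dispersion hd hg.le hσ hMpos hU02
      (fst_sq_add_snd_sq_pos hk0) (hpos k hk).le (hlower k hk) hdisp⟩
  · obtain ⟨-, hk0, hdisp⟩ := hN ▸ hk
    have := fst_sq_add_snd_sq_pos hk0
    have hlhs : 0 < q k 0 * (g + σ * (k.1 ^ 2 + k.2 ^ 2)) := mul_pos (hpos k hk) (by positivity)
    rw [hdisp, hk1] at hlhs
    simp at hlhs

/-- The set `N(U)` of nonzero lattice vectors satisfying the dispersion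
relation `q_k(0)(g + σ|k|²) = k₁²U(0)²` is finite, and each of its members has `k₁ ≠ 0`. -/
theorem stmt_14 (d g σ lam1 lam2 : ℝ) (hd : 0 < d) (hg : 0 < g) (hσ : 0 < σ)
    (hlam1 : 0 < lam1) (hlam2 : 0 < lam2) (U : ℝ → ℝ)
    (hU : ContDiffOn ℝ 1 U (Set.Icc (-d) 0))
    (hU0 : ∀ t ∈ Set.Icc (-d) 0, U t ≠ 0)
    (Λstar : Set (ℝ × ℝ))
    (hΛ : Λstar = {k : ℝ × ℝ | ∃ m n : ℤ,
      k = ((2 * Real.pi / lam1) * (m : ℝ), (2 * Real.pi / lam2) * (n : ℝ))})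
    (q : ℝ × ℝ → ℝ → ℝ)
    (hq : ∀ k ∈ Λstar, k ≠ (0 : ℝ × ℝ) →
      ContDiffOn ℝ 1 (q k) (Set.Icc (-d) 0) ∧
      (∀ x ∈ Set.Icc (-d) 0,
        derivWithin (q k) (Set.Icc (-d) 0) x
          = 2 * (derivWithin U (Set.Icc (-d) 0) x / U x) * q k x
            + (k.1 ^ 2 + k.2 ^ 2) - (q k x) ^ 2) ∧
      q k (-d) = 0)
    (N : Set (ℝ × ℝ))
    (hN : N = {k : ℝ × ℝ | k ∈ Λstar ∧ k ≠ 0 ∧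
      q k 0 * (g + σ * (k.1 ^ 2 + k.2 ^ 2)) = k.1 ^ 2 * (U 0) ^ 2}) :
    N.Finite ∧ ∀ k ∈ N, k.1 ≠ 0 :=
  stmt_14_general d g σ lam1 lam2 hd hg hσ U hU hU0 Λstar hΛ q hq N hN
end

section
/- Let d, g, σ > 0, let U ∈ C¹([−d,0];ℝ) be nonvanishing, and let λ₁, λ₂ > 0 with dual lattice Λ* = (2π/λ₁)ℤ × (2π/λ₂)ℤ. For each k ∈ Λ*∖{0} let q_k be the solution of the Riccati initial value problem with parameter κ² = |k|² = k₁² + k₂². If k, l ∈ Λ*∖{0} both satisfy the dispersion relation q_k(0)·(g + σ|k|²) = k₁²U(0)² and q_l(0)·(g + σ|l|²) = l₁²U(0)², and if k₁² = l₁², then k₂² = l₂². -/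
/-!
The difference `w = q_k - q_l` of two Riccati solutions satisfies the linear
equation `w' = (2U'/U - q_k - q_l) w + (|k|² - |l|²)` with `w(-d) = 0`. If `|k|² > |l|²`, then
`w' > 0` wherever `w` vanishes, so `w` can never return to zero and `q_k(0) > q_l(0)`. Since
`g + σ|k|² > g + σ|l|²` as well and `q_l(0) ≥ 0`, the left-hand side `q(0)(g + σ|·|²)` of the
dispersion relation is strictly larger for `k` than for `l`, while the right-hand sides agree
because `k₁² = l₁²`. Hence `|k|² = |l|²`.
-/

open Set

theorem pos_of_deriv_pos_at_zeros {f f' : ℝ → ℝ} {a b : ℝ} (hab : a < b)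
    (hf : ∀ x ∈ Icc a b, HasDerivWithinAt f (f' x) (Icc a b) x) (ha : f a = 0)
    (hzero : ∀ x ∈ Icc a b, f x = 0 → 0 < f' x) : 0 < f b := by
  have hb : b ∈ Icc a b := right_mem_Icc.2 hab.le
  have hnonneg : ∀ x ∈ Icc a b, 0 ≤ f x := by
    have := image_le_of_deriv_right_lt_deriv_boundary (f := -f) (f' := -f') (B := 0) (B' := 0)
      (fun x hx => (hf x hx).continuousWithinAt.neg)
      (fun x hx => ((hf x (Ico_subset_Icc_self hx)).mono_of_mem_nhdsWithin
        (Icc_mem_nhdsGE_of_mem hx)).neg)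
      (by simp [ha]) (fun x => hasDerivAt_const x 0)
      (fun x hx hfx => by simpa using hzero x (Ico_subset_Icc_self hx) (by simpa using hfx))
    simpa using this
  refine (hnonneg b hb).lt_of_ne' fun hfb => ?_
  -- `b` would be a minimum of `f` on `[a, b]`, forcing `f' b ≤ 0`.
  have hmin : IsMinOn f (Icc a b) b := fun x hx => by simpa [hfb] using hnonneg x hx
  have htan : a - b ∈ posTangentConeAt (Icc a b) b :=
    sub_mem_posTangentConeAt_of_segment_subset (by rw [segment_symm, segment_eq_Icc hab.le])
  have := hmin.localize.hasFDerivWithinAt_nonneg (hf b hb) htan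
  rw [ContinuousLinearMap.toSpanSingleton_apply, smul_eq_mul] at this
  nlinarith [hzero b hb hfb]

/-- For the water-wave problem, `α = 2U'/U`, `c = |k|²` and `[a, b] = [-d, 0]`. -/
def IsRiccatiSolution (α : ℝ → ℝ) (c a b : ℝ) (y : ℝ → ℝ) : Prop :=
  DifferentiableOn ℝ y (Icc a b) ∧
    (∀ x ∈ Icc a b, derivWithin y (Icc a b) x = α x * y x + c - y x ^ 2) ∧ y a = 0

namespace IsRiccatiSolution

variable {α p q : ℝ → ℝ} {a b c c' : ℝ}

theorem lt_of_param_lt (hp : IsRiccatiSolution α c a b p) (hq : IsRiccatiSolution α c' a b q)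
    (hab : a < b) (hcc' : c' < c) : q b < p b := by
  obtain ⟨hp_diff, hp_deriv, hpa⟩ := hp
  obtain ⟨hq_diff, hq_deriv, hqa⟩ := hq
  have hw : ∀ x ∈ Icc a b, HasDerivWithinAt (fun x => p x - q x)
      ((α x - p x - q x) * (p x - q x) + (c - c')) (Icc a b) x := by
    intro x hx
    refine ((hp_diff x hx).hasDerivWithinAt.sub (hq_diff x hx).hasDerivWithinAt).congr_deriv ?_
    rw [hp_deriv x hx, hq_deriv x hx]
    ring
  have hpos := pos_of_deriv_pos_at_zeros hab hw (by simp [hpa, hqa])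
    fun x _ hx => by rw [hx]; linarith
  exact sub_pos.1 hpos

theorem dispersion_lt_of_param_lt {g σ : ℝ} (hp : IsRiccatiSolution α c a b p)
    (hq : IsRiccatiSolution α c' a b q) (hab : a < b) (hcc' : c' < c) (hσ : 0 ≤ σ)
    (hG : 0 < g + σ * c') (hqb : 0 ≤ q b) : q b * (g + σ * c') < p b * (g + σ * c) := by
  have hpq := hp.lt_of_param_lt hq hab hcc'
  exact mul_lt_mul hpq (by gcongr) hG (hqb.trans hpq.le)

end IsRiccatiSolution

theorem stmt_15_general (d g σ : ℝ) (hd : 0 < d) (hg : 0 < g) (hσ : 0 < σ)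
    (U : ℝ → ℝ)
    (Λstar : Set (ℝ × ℝ))
    (q : ℝ × ℝ → ℝ → ℝ)
    (hq : ∀ k ∈ Λstar, k ≠ (0 : ℝ × ℝ) →
      ContDiffOn ℝ 1 (q k) (Set.Icc (-d) 0) ∧
      (∀ x ∈ Set.Icc (-d) 0,
        derivWithin (q k) (Set.Icc (-d) 0) x
          = 2 * (derivWithin U (Set.Icc (-d) 0) x / U x) * q k x
            + (k.1 ^ 2 + k.2 ^ 2) - (q k x) ^ 2) ∧
      q k (-d) = 0)
    (k l : ℝ × ℝ) (hk : k ∈ Λstar) (hk0 : k ≠ 0) (hl : l ∈ Λstar) (hl0 : l ≠ 0)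
    (hdispk : q k 0 * (g + σ * (k.1 ^ 2 + k.2 ^ 2)) = k.1 ^ 2 * (U 0) ^ 2)
    (hdispl : q l 0 * (g + σ * (l.1 ^ 2 + l.2 ^ 2)) = l.1 ^ 2 * (U 0) ^ 2)
    (h1 : k.1 ^ 2 = l.1 ^ 2) :
    k.2 ^ 2 = l.2 ^ 2 := by
  have hsol : ∀ m ∈ Λstar, m ≠ 0 → IsRiccatiSolution
      (fun x => 2 * (derivWithin U (Icc (-d) 0) x / U x)) (m.1 ^ 2 + m.2 ^ 2) (-d) 0 (q m) :=
    fun m hm hm0 => by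
      obtain ⟨hdiff, hderiv, hinit⟩ := hq m hm hm0
      exact ⟨hdiff.differentiableOn one_ne_zero, hderiv, hinit⟩
  have hG : ∀ m : ℝ × ℝ, 0 < g + σ * (m.1 ^ 2 + m.2 ^ 2) := fun m => by positivity
  have hqk : 0 ≤ q k 0 := nonneg_of_mul_nonneg_left (hdispk ▸ by positivity) (hG k)
  have hql : 0 ≤ q l 0 := nonneg_of_mul_nonneg_left (hdispl ▸ by positivity) (hG l)
  have hdisp : q k 0 * (g + σ * (k.1 ^ 2 + k.2 ^ 2))
      = q l 0 * (g + σ * (l.1 ^ 2 + l.2 ^ 2)) := by rw [hdispk, hdispl, h1]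
  have hd0 : -d < 0 := neg_lt_zero.2 hd
  rcases lt_trichotomy (k.1 ^ 2 + k.2 ^ 2) (l.1 ^ 2 + l.2 ^ 2) with hlt | heq | hgt
  · exact absurd hdisp
      ((hsol l hl hl0).dispersion_lt_of_param_lt (hsol k hk hk0) hd0 hlt hσ.le (hG k) hqk).ne
  · linarith
  · exact absurd hdisp.symm
      ((hsol k hk hk0).dispersion_lt_of_param_lt (hsol l hl hl0) hd0 hgt hσ.le (hG l) hql).ne

/-- If two nonzero lattice vectors `k, l` both satisfy the dispersion
relation and `k₁² = l₁²`, then `k₂² = l₂²`. -/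
theorem stmt_15 (d g σ lam1 lam2 : ℝ) (hd : 0 < d) (hg : 0 < g) (hσ : 0 < σ)
    (hlam1 : 0 < lam1) (hlam2 : 0 < lam2) (U : ℝ → ℝ)
    (hU : ContDiffOn ℝ 1 U (Set.Icc (-d) 0))
    (hU0 : ∀ t ∈ Set.Icc (-d) 0, U t ≠ 0)
    (Λstar : Set (ℝ × ℝ))
    (hΛ : Λstar = {k : ℝ × ℝ | ∃ m n : ℤ,
      k = ((2 * Real.pi / lam1) * (m : ℝ), (2 * Real.pi / lam2) * (n : ℝ))})
    (q : ℝ × ℝ → ℝ → ℝ)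
    (hq : ∀ k ∈ Λstar, k ≠ (0 : ℝ × ℝ) →
      ContDiffOn ℝ 1 (q k) (Set.Icc (-d) 0) ∧
      (∀ x ∈ Set.Icc (-d) 0,
        derivWithin (q k) (Set.Icc (-d) 0) x
          = 2 * (derivWithin U (Set.Icc (-d) 0) x / U x) * q k x
            + (k.1 ^ 2 + k.2 ^ 2) - (q k x) ^ 2) ∧
      q k (-d) = 0)
    (k l : ℝ × ℝ) (hk : k ∈ Λstar) (hk0 : k ≠ 0) (hl : l ∈ Λstar) (hl0 : l ≠ 0)
    (hdispk : q k 0 * (g + σ * (k.1 ^ 2 + k.2 ^ 2)) = k.1 ^ 2 * (U 0) ^ 2)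
    (hdispl : q l 0 * (g + σ * (l.1 ^ 2 + l.2 ^ 2)) = l.1 ^ 2 * (U 0) ^ 2)
    (h1 : k.1 ^ 2 = l.1 ^ 2) :
    k.2 ^ 2 = l.2 ^ 2 :=
  stmt_15_general d g σ hd hg hσ U Λstar q hq k l hk hk0 hl hl0 hdispk hdispl h1
end

section
/- Let d > 0 and let U ∈ C¹([−d,0];ℝ) be nonvanishing. Let N be a finite set of pairs k = (k₁,k₂) ∈ ℝ² with k₁ > 0 and k₂ > 0, and let a : N → ℝ be coefficients with a_k ≠ 0 for at least one k ∈ N. For each k ∈ N let q_k ∈ C¹([−d,0];ℝ) satisfy the Riccati equation q_k′ = 2(U′/U)q_k + (k₁²+k₂²) − q_k² on [−d,0] with q_k(−d) = 0, and let Q_k ∈ C¹([−d,0];ℝ) be strictly positive with Q_k′ = q_k Q_k. Define f = Σ_{k∈N} (a_k² k₂²/k₁²)·Q_k²·(k₁² − k₂² + q_k²). If U′(x₃)·f(x₃) = 0 for all x₃ ∈ [−d,0], then U′ vanishes identically on [−d,0], i.e. U is constant. -/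
open Set Filter Topology

/-!
Write `r = U′/U`. The sum `f` satisfies `f′ = Σ 4 w_k q_k Q_k² (k₁² + r q_k)`, and every `q_k` is
positive on `(−d, 0]` because `(q_k Q_k / U²)′ = (k₁² + k₂²) Q_k / U² > 0` and `q_k(−d) = 0`.
Wherever `U′ ≠ 0` the hypothesis forces `f ≡ 0` nearby, hence `f′ = 0`. But `f′ > 0` at every
zero of `U′` in `(−d, 0]`, where `r = 0`, and also just to the right of `−d`, where the `q_k` are
small. So the zero set of `U′` is closed, open in `(−d, 0)` and contains a right neighbourhood of
`−d`; by connectedness it is all of `[−d, 0]`.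
-/

theorem Icc_eqOn_zero_of_eventually_eq_zero {a b : ℝ} {u : ℝ → ℝ} (hab : a < b)
    (hu : ContinuousOn u (Icc a b)) (ha : ∀ᶠ x in 𝓝[>] a, u x = 0)
    (hzero : ∀ x ∈ Ioo a b, u x = 0 → ∀ᶠ y in 𝓝[Icc a b] x, u y = 0) :
    ∀ x ∈ Icc a b, u x = 0 := by
  have hua : u a = 0 := by
    have hlim : Tendsto u (𝓝[>] a) (𝓝 (u a)) := by
      rw [← nhdsWithin_Ioc_eq_nhdsGT hab]
      exact (hu a (left_mem_Icc.2 hab.le)).mono Ioc_subset_Icc_self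
    exact tendsto_nhds_unique hlim (tendsto_const_nhds.congr' (ha.mono fun x hx => hx.symm))
  have hclosed : IsClosed ({x | u x = 0} ∩ Icc a b) := by
    rw [inter_comm]
    exact hu.preimage_isClosed_of_isClosed isClosed_Icc isClosed_singleton
  refine fun x hx => IsClosed.Icc_subset_of_forall_mem_nhdsWithin hclosed hua ?_ hx
  rintro y ⟨hy0, hy⟩
  rcases hy.1.eq_or_lt with rfl | hay
  · exact ha
  · exact nhdsWithin_le_of_mem (Icc_mem_nhdsGT_of_mem hy) (hzero y ⟨hay, hy.2⟩ hy0)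

theorem HasDerivWithinAt.eq_zero_of_mul_eq_zero {f u : ℝ → ℝ} {f' x : ℝ} {s : Set ℝ}
    (hf : HasDerivWithinAt f f' s x) (hs : UniqueDiffWithinAt ℝ s x) (hx : x ∈ s)
    (hu : ContinuousWithinAt u s x) (hux : u x ≠ 0) (huf : ∀ y ∈ s, u y * f y = 0) :
    f' = 0 := by
  have hf0 : f =ᶠ[𝓝[s] x] fun _ => 0 := by
    filter_upwards [hu.eventually_ne hux, self_mem_nhdsWithin] with y hy hys
    exact (mul_eq_zero.1 (huf y hys)).resolve_left hy
  exact hs.eq_deriv s hf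
    ((hasDerivWithinAt_const x s 0).congr_of_eventuallyEq hf0 (hf0.self_of_nhdsWithin hx))

theorem riccati_pos {a b c : ℝ} {U u q Q : ℝ → ℝ} (hc : 0 < c)
    (hU : ∀ x ∈ Icc a b, HasDerivWithinAt U (u x) (Icc a b) x) (hU0 : ∀ x ∈ Icc a b, U x ≠ 0)
    (hq : ∀ x ∈ Icc a b, HasDerivWithinAt q (2 * (u x / U x) * q x + c - q x ^ 2) (Icc a b) x)
    (hQ : ∀ x ∈ Icc a b, HasDerivWithinAt Q (q x * Q x) (Icc a b) x)
    (hQpos : ∀ x ∈ Icc a b, 0 < Q x) (hqa : q a = 0) {x : ℝ} (hx : x ∈ Ioc a b) : 0 < q x := by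
  have hderiv : ∀ y ∈ Icc a b,
      HasDerivWithinAt (fun y => q y * Q y / U y ^ 2) (c * Q y / U y ^ 2) (Icc a b) y := by
    intro y hy
    refine (((hq y hy).mul (hQ y hy)).div ((hU y hy).pow 2)
      (pow_ne_zero 2 (hU0 y hy))).congr_deriv ?_
    simp only [Pi.mul_apply, Pi.pow_apply]
    field_simp [hU0 y hy]
    ring
  have hmono : StrictMonoOn (fun y => q y * Q y / U y ^ 2) (Icc a b) := by
    refine strictMonoOn_of_hasDerivWithinAt_pos (convex_Icc a b) (f' := fun y => c * Q y / U y ^ 2)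
      (fun y hy => (hderiv y hy).continuousWithinAt) (fun y hy => ?_) (fun y hy => ?_)
    · exact (hderiv y (interior_subset hy)).mono interior_subset
    · have := hQpos y (interior_subset hy)
      have := hU0 y (interior_subset hy)
      positivity
  have hlt := hmono (left_mem_Icc.2 (hx.1.trans_le hx.2).le) (Ioc_subset_Icc_self hx) hx.1
  simp only [hqa, zero_mul, zero_div] at hlt
  have hU2 : 0 < U x ^ 2 := by have := hU0 x (Ioc_subset_Icc_self hx); positivity
  exact pos_of_mul_pos_left ((div_pos_iff_of_pos_right hU2).1 hlt)
    (hQpos x (Ioc_subset_Icc_self hx)).le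

theorem HasDerivWithinAt.riccati_energy {q Q : ℝ → ℝ} {s : Set ℝ} {x w A B r : ℝ}
    (hq : HasDerivWithinAt q (2 * r * q x + (A + B) - q x ^ 2) s x)
    (hQ : HasDerivWithinAt Q (q x * Q x) s x) :
    HasDerivWithinAt (fun y => w * Q y ^ 2 * (A - B + q y ^ 2))
      (4 * w * q x * Q x ^ 2 * (A + r * q x)) s x := by
  refine (((hQ.pow 2).const_mul w).mul
    ((hasDerivWithinAt_const x s (A - B)).add (hq.pow 2))).congr_deriv ?_
  simp only [Pi.add_apply, Pi.pow_apply]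
  push_cast
  ring

/-- The paper's `f`, with general weights `w k` in place of `a_k² k₂² / k₁²`. -/
def riccatiEnergy (N : Finset (ℝ × ℝ)) (w : ℝ × ℝ → ℝ) (q Q : ℝ × ℝ → ℝ → ℝ) (x : ℝ) : ℝ :=
  ∑ k ∈ N, w k * Q k x ^ 2 * (k.1 ^ 2 - k.2 ^ 2 + q k x ^ 2)

def riccatiEnergyDeriv (N : Finset (ℝ × ℝ)) (w : ℝ × ℝ → ℝ) (r : ℝ → ℝ) (q Q : ℝ × ℝ → ℝ → ℝ)
    (x : ℝ) : ℝ :=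
  ∑ k ∈ N, 4 * w k * q k x * Q k x ^ 2 * (k.1 ^ 2 + r x * q k x)

theorem hasDerivWithinAt_riccatiEnergy {N : Finset (ℝ × ℝ)} {w : ℝ × ℝ → ℝ} {r : ℝ → ℝ}
    {q Q : ℝ × ℝ → ℝ → ℝ} {s : Set ℝ} {x : ℝ}
    (hq : ∀ k ∈ N, HasDerivWithinAt (q k) (2 * r x * q k x + (k.1 ^ 2 + k.2 ^ 2) - q k x ^ 2) s x)
    (hQ : ∀ k ∈ N, HasDerivWithinAt (Q k) (q k x * Q k x) s x) :
    HasDerivWithinAt (riccatiEnergy N w q Q) (riccatiEnergyDeriv N w r q Q x) s x :=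
  HasDerivWithinAt.fun_sum fun k hk => (hq k hk).riccati_energy (hQ k hk)

theorem riccatiEnergyDeriv_pos {N : Finset (ℝ × ℝ)} {w : ℝ × ℝ → ℝ} {r : ℝ → ℝ}
    {q Q : ℝ × ℝ → ℝ → ℝ} {x : ℝ} (hw : ∀ k ∈ N, 0 ≤ w k) (hw' : ∃ k ∈ N, 0 < w k)
    (hq : ∀ k ∈ N, 0 < q k x) (hQ : ∀ k ∈ N, Q k x ≠ 0)
    (hr : ∀ k ∈ N, 0 < k.1 ^ 2 + r x * q k x) :
    0 < riccatiEnergyDeriv N w r q Q x := by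
  refine Finset.sum_pos' (fun k hk => ?_) ?_
  · have := hw k hk; have := hq k hk; have := hr k hk
    positivity
  · obtain ⟨k, hk, hwk⟩ := hw'
    have := hq k hk; have := hQ k hk; have := hr k hk
    exact ⟨k, hk, by positivity⟩

theorem eventually_sq_add_mul_pos {N : Finset (ℝ × ℝ)} {r : ℝ → ℝ} {q : ℝ × ℝ → ℝ → ℝ}
    {s : Set ℝ} {a : ℝ} (hN : ∀ k ∈ N, k.1 ≠ 0) (hr : ContinuousWithinAt r s a)
    (hq : ∀ k ∈ N, ContinuousWithinAt (q k) s a) (hqa : ∀ k ∈ N, q k a = 0) :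
    ∀ᶠ x in 𝓝[s] a, ∀ k ∈ N, 0 < k.1 ^ 2 + r x * q k x := by
  refine (eventually_all_finset N).2 fun k hk => ?_
  have hcont : ContinuousWithinAt (fun x => k.1 ^ 2 + r x * q k x) s a :=
    continuousWithinAt_const.add (hr.mul (hq k hk))
  have hlim := hcont.tendsto
  rw [hqa k hk, mul_zero, add_zero] at hlim
  exact hlim.eventually_const_lt (by have := hN k hk; positivity)

theorem eqOn_zero_of_mul_riccatiEnergy_eq_zero {a b : ℝ} (hab : a < b) {U u : ℝ → ℝ}
    {N : Finset (ℝ × ℝ)} {w : ℝ × ℝ → ℝ} {q Q : ℝ × ℝ → ℝ → ℝ}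
    (hU : ContinuousOn U (Icc a b)) (hU0 : ∀ x ∈ Icc a b, U x ≠ 0)
    (hu : ContinuousOn u (Icc a b)) (hN : ∀ k ∈ N, k.1 ≠ 0) (hw : ∀ k ∈ N, 0 ≤ w k)
    (hw' : ∃ k ∈ N, 0 < w k)
    (hq : ∀ k ∈ N, ∀ x ∈ Icc a b, HasDerivWithinAt (q k)
      (2 * (u x / U x) * q k x + (k.1 ^ 2 + k.2 ^ 2) - q k x ^ 2) (Icc a b) x)
    (hqa : ∀ k ∈ N, q k a = 0) (hqpos : ∀ k ∈ N, ∀ x ∈ Ioc a b, 0 < q k x)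
    (hQ : ∀ k ∈ N, ∀ x ∈ Icc a b, HasDerivWithinAt (Q k) (q k x * Q k x) (Icc a b) x)
    (hQ0 : ∀ k ∈ N, ∀ x ∈ Icc a b, Q k x ≠ 0)
    (huf : ∀ x ∈ Icc a b, u x * riccatiEnergy N w q Q x = 0) :
    ∀ x ∈ Icc a b, u x = 0 := by
  set r : ℝ → ℝ := fun x => u x / U x
  have hr : ContinuousOn r (Icc a b) := hu.div hU hU0
  have hqc : ∀ k ∈ N, ContinuousOn (q k) (Icc a b) := fun k hk x hx =>
    (hq k hk x hx).continuousWithinAt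
  have hQc : ∀ k ∈ N, ContinuousOn (Q k) (Icc a b) := fun k hk x hx =>
    (hQ k hk x hx).continuousWithinAt
  set g := riccatiEnergyDeriv N w r q Q
  have hg : ContinuousOn g (Icc a b) := continuousOn_finsetSum N fun k hk =>
    (((continuousOn_const.mul (hqc k hk)).mul ((hQc k hk).pow 2)).mul
      (continuousOn_const.add (hr.mul (hqc k hk))))
  have hg_pos : ∀ x ∈ Ioc a b, (∀ k ∈ N, 0 < k.1 ^ 2 + r x * q k x) → 0 < g x := fun x hx =>
    riccatiEnergyDeriv_pos hw hw' (fun k hk => hqpos k hk x hx)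
      (fun k hk => hQ0 k hk x (Ioc_subset_Icc_self hx))
  have hu_zero : ∀ x ∈ Icc a b, 0 < g x → u x = 0 := by
    intro x hx hgx
    by_contra hux
    refine hgx.ne' ((hasDerivWithinAt_riccatiEnergy (fun k hk => hq k hk x hx)
      (fun k hk => hQ k hk x hx)).eq_zero_of_mul_eq_zero (uniqueDiffOn_Icc hab x hx) hx
      (hu x hx) hux huf)
  refine Icc_eqOn_zero_of_eventually_eq_zero hab hu ?_ fun x hx hux => ?_
  · have ha : a ∈ Icc a b := left_mem_Icc.2 hab.le
    rw [← nhdsWithin_Ioc_eq_nhdsGT hab]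
    filter_upwards [eventually_sq_add_mul_pos hN ((hr a ha).mono Ioc_subset_Icc_self)
      (fun k hk => (hqc k hk a ha).mono Ioc_subset_Icc_self) hqa, self_mem_nhdsWithin]
      with y hy hyI
    exact hu_zero y (Ioc_subset_Icc_self hyI) (hg_pos y hyI hy)
  · have hgx : 0 < g x := hg_pos x (Ioo_subset_Ioc_self hx) fun k hk => by
      simpa [r, hux] using sq_pos_of_ne_zero (hN k hk)
    filter_upwards [(hg x (Ioo_subset_Icc_self hx)).eventually_const_lt hgx,
      self_mem_nhdsWithin] with y hy hyI
    exact hu_zero y hyI hy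

/-- If `U′f ≡ 0` on `[−d,0]`, where
`f = Σ_k (a_k²k₂²/k₁²)Q_k²(k₁² − k₂² + q_k²)` with at least one `a_k ≠ 0`, the `q_k`
solving the Riccati initial value problems and `Q_k > 0` with `Q_k′ = q_kQ_k`, then
`U′` vanishes identically on `[−d,0]`, i.e. `U` is constant. -/
theorem stmt_17 (d : ℝ) (hd : 0 < d) (U : ℝ → ℝ)
    (hU : ContDiffOn ℝ 1 U (Set.Icc (-d) 0))
    (hU0 : ∀ t ∈ Set.Icc (-d) 0, U t ≠ 0)
    (N : Finset (ℝ × ℝ)) (hN : ∀ k ∈ N, 0 < k.1 ∧ 0 < k.2)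
    (a : ℝ × ℝ → ℝ) (ha : ∃ k ∈ N, a k ≠ 0)
    (q Q : ℝ × ℝ → ℝ → ℝ)
    (hq : ∀ k ∈ N, ContDiffOn ℝ 1 (q k) (Set.Icc (-d) 0))
    (hode : ∀ k ∈ N, ∀ x ∈ Set.Icc (-d) 0,
      derivWithin (q k) (Set.Icc (-d) 0) x
        = 2 * (derivWithin U (Set.Icc (-d) 0) x / U x) * q k x
          + (k.1 ^ 2 + k.2 ^ 2) - (q k x) ^ 2)
    (hq0 : ∀ k ∈ N, q k (-d) = 0)
    (hQ : ∀ k ∈ N, ContDiffOn ℝ 1 (Q k) (Set.Icc (-d) 0))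
    (hQpos : ∀ k ∈ N, ∀ x ∈ Set.Icc (-d) 0, 0 < Q k x)
    (hQ' : ∀ k ∈ N, ∀ x ∈ Set.Icc (-d) 0,
      derivWithin (Q k) (Set.Icc (-d) 0) x = q k x * Q k x)
    (hUf : ∀ x ∈ Set.Icc (-d) 0,
      derivWithin U (Set.Icc (-d) 0) x
        * ∑ k ∈ N,
            ((a k) ^ 2 * k.2 ^ 2 / k.1 ^ 2) * (Q k x) ^ 2
              * (k.1 ^ 2 - k.2 ^ 2 + (q k x) ^ 2) = 0) :
    ∀ x ∈ Set.Icc (-d) 0, derivWithin U (Set.Icc (-d) 0) x = 0 := by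
  have hd' : -d < 0 := neg_lt_zero.2 hd
  have hderiv {f : ℝ → ℝ} (hf : ContDiffOn ℝ 1 f (Icc (-d) 0)) (x : ℝ) (hx : x ∈ Icc (-d) 0) :
      HasDerivWithinAt f (derivWithin f (Icc (-d) 0) x) (Icc (-d) 0) x :=
    (hf.differentiableOn one_ne_zero x hx).hasDerivWithinAt
  have hqd k (hk : k ∈ N) x (hx : x ∈ Icc (-d) 0) := hode k hk x hx ▸ hderiv (hq k hk) x hx
  have hQd k (hk : k ∈ N) x (hx : x ∈ Icc (-d) 0) := hQ' k hk x hx ▸ hderiv (hQ k hk) x hx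
  have hqpos : ∀ k ∈ N, ∀ x ∈ Ioc (-d) 0, 0 < q k x := fun k hk _ hx =>
    riccati_pos (by obtain ⟨h₁, -⟩ := hN k hk; positivity) (hderiv hU) hU0 (hqd k hk) (hQd k hk)
      (hQpos k hk) (hq0 k hk) hx
  obtain ⟨k₀, hk₀, hak₀⟩ := ha
  refine eqOn_zero_of_mul_riccatiEnergy_eq_zero hd' hU.continuousOn hU0
    (hU.continuousOn_derivWithin (uniqueDiffOn_Icc hd') le_rfl) (fun k hk => (hN k hk).1.ne')
    (w := fun k => a k ^ 2 * k.2 ^ 2 / k.1 ^ 2) (fun k _ => by positivity)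
    ⟨k₀, hk₀, by obtain ⟨h₁, h₂⟩ := hN k₀ hk₀; positivity⟩ hqd hq0 hqpos hQd
    (fun k hk x hx => (hQpos k hk x hx).ne') hUf
end

section
/- Let d > 0, let U ∈ C²([−d,0];ℝ) be nonvanishing, let k₁ > 0 and k₂ > 0, and let a ∈ ℝ. Let q ∈ C¹([−d,0];ℝ) satisfy q′ = 2(U′/U)q + (k₁²+k₂²) − q² on [−d,0] with q(−d) = 0, and let Q ∈ C²([−d,0];ℝ) satisfy Q′ = qQ. On Ω̄ = ℝ²×[−d,0] define v₂(x) = 4a (k₂ Q(x₃)/(k₁ U(x₃))) sin(k₁x₁) sin(k₂x₂) and v₃(x) = −4a (Q(x₃) q(x₃)/(k₁ U(x₃))) sin(k₁x₁) cos(k₂x₂). Then for all (x₂,x₃) ∈ ℝ×[−d,0]: (k₁/2π)·∫₀^{2π/k₁} [ (∂₂² − ∂₃²)(v₂v₃) + ∂₂∂₃(v₃² − v₂²) ](x₁,x₂,x₃) dx₁ = −8 (U′(x₃)/U(x₃)³) · a² (k₂/k₁²) · Q(x₃)² · (k₁² − k₂² + q(x₃)²) · sin(2k₂x₂). -/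
/-!
Every term of the integrand is a separable field `g(x₁) h(x₂) w(x₃)` or a sum of two such,
so `∂₂` and `∂₃` act on the factors `h` and `w` alone, and the `x₁`-average only sees
`sin²(k₁x₁)`, whose mean is `1/2`. With `R = Q²/U²` the relation `Q′ = qQ` gives
`R′ = 2(q − U′/U)R`, and the Riccati equation gives `(qR)′ = (k₁² + k₂² + q²)R`: all
`x₃`-derivatives become multiples of `R`, and the terms without a factor `U′` cancel.
-/

/-- Partial derivative in the second coordinate of a scalar field on `ℝ³ = ℝ×ℝ×ℝ`. -/
noncomputable def d2 (f : ℝ × ℝ × ℝ → ℝ) (x : ℝ × ℝ × ℝ) : ℝ :=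
  deriv (fun t => f (x.1, t, x.2.2)) x.2.1

/-- Partial derivative in the third coordinate, within the slab `x₃ ∈ [−d,0]`. -/
noncomputable def d3 (d : ℝ) (f : ℝ × ℝ × ℝ → ℝ) (x : ℝ × ℝ × ℝ) : ℝ :=
  derivWithin (fun t => f (x.1, x.2.1, t)) (Set.Icc (-d) 0) x.2.2

open Real Set

theorem deriv_sin_const_mul (c : ℝ) :
    deriv (fun t => sin (c * t)) = fun t => c * cos (c * t) := by
  funext t
  rw [(hasDerivAt_const_mul c).sin.deriv, mul_comm]

theorem deriv_cos_const_mul (c : ℝ) :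
    deriv (fun t => cos (c * t)) = fun t => -(c * sin (c * t)) := by
  funext t
  rw [(hasDerivAt_const_mul c).cos.deriv]
  ring

theorem average_sin_sq_mul {k : ℝ} (hk : k ≠ 0) (c : ℝ) :
    k / (2 * π) * ∫ x in (0 : ℝ)..(2 * π / k), sin (k * x) ^ 2 * c = c / 2 := by
  rw [intervalIntegral.integral_mul_const,
    intervalIntegral.integral_comp_mul_left (fun x => sin x ^ 2) hk, integral_sin_sq,
    mul_div_cancel₀ _ hk]
  simp only [mul_zero, sin_zero, sin_two_pi, smul_eq_mul]
  field_simp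
  ring

section Separable

def separableField (g h w : ℝ → ℝ) (y : ℝ × ℝ × ℝ) : ℝ := g y.1 * h y.2.1 * w y.2.2

variable {d : ℝ} {g h w : ℝ → ℝ}

theorem d2_separableField : d2 (separableField g h w) = separableField g (deriv h) w := by
  funext x
  show deriv (fun t => g x.1 * h t * w x.2.2) x.2.1 = g x.1 * deriv h x.2.1 * w x.2.2
  rw [deriv_mul_const_field, deriv_const_mul_field]

theorem d3_separableField :
    d3 d (separableField g h w) = separableField g h (derivWithin w (Icc (-d) 0)) := by
  funext x
  show derivWithin (fun t => g x.1 * h x.2.1 * w t) _ _ = _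
  exact derivWithin_const_mul_field _

theorem d2_d3_separableField_add {h' w' : ℝ → ℝ} {x : ℝ × ℝ × ℝ}
    (hh : DifferentiableAt ℝ h x.2.1) (hh' : DifferentiableAt ℝ h' x.2.1)
    (hw : DifferentiableWithinAt ℝ w (Icc (-d) 0) x.2.2)
    (hw' : DifferentiableWithinAt ℝ w' (Icc (-d) 0) x.2.2) :
    d2 (d3 d (separableField g h w + separableField g h' w')) x
      = d2 (d3 d (separableField g h w)) x + d2 (d3 d (separableField g h' w')) x := by
  have hline : ∀ t, d3 d (separableField g h w + separableField g h' w') (x.1, t, x.2.2)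
      = d3 d (separableField g h w) (x.1, t, x.2.2)
        + d3 d (separableField g h' w') (x.1, t, x.2.2) := fun t =>
    show derivWithin (fun r => g x.1 * h t * w r + g x.1 * h' t * w' r) _ _ = _ from
      derivWithin_add (hw.const_mul _) (hw'.const_mul _)
  simp only [d2, hline, d3_separableField, separableField]
  exact deriv_add (((differentiableAt_const _).mul hh).mul_const _)
    (((differentiableAt_const _).mul hh').mul_const _)

end Separable

section Riccati

variable {s : Set ℝ} {q R : ℝ → ℝ} {K t : ℝ}

theorem hasDerivWithinAt_sq_div_sq {Q U : ℝ → ℝ} {U' : ℝ}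
    (hQ : HasDerivWithinAt Q (q t * Q t) s t) (hU : HasDerivWithinAt U U' s t) (hUt : U t ≠ 0) :
    HasDerivWithinAt (fun r => Q r ^ 2 / U r ^ 2)
      (2 * (q t - U' / U t) * (Q t ^ 2 / U t ^ 2)) s t := by
  refine ((hQ.fun_pow 2).fun_div (hU.fun_pow 2) (pow_ne_zero 2 hUt)).congr_deriv ?_
  field_simp
  ring

theorem hasDerivWithinAt_mul_of_riccati {u : ℝ}
    (hq : HasDerivWithinAt q (2 * u * q t + K - q t ^ 2) s t)
    (hR : HasDerivWithinAt R (2 * (q t - u) * R t) s t) :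
    HasDerivWithinAt (fun r => q r * R r) ((K + q t ^ 2) * R t) s t :=
  (hq.fun_mul hR).congr_deriv (by ring)

theorem hasDerivWithinAt_const_add_sq_mul_of_riccati {u : ℝ} (c : ℝ)
    (hq : HasDerivWithinAt q (2 * u * q t + K - q t ^ 2) s t)
    (hR : HasDerivWithinAt R (2 * (q t - u) * R t) s t) :
    HasDerivWithinAt (fun r => (c + q r ^ 2) * R r)
      (2 * (u * q t ^ 2 + (K + c) * q t - c * u) * R t) s t :=
  (((hq.fun_pow 2).const_add c).fun_mul hR).congr_deriv (by ring)

theorem derivWithin_derivWithin_const_mul_mul_of_riccati (hs : UniqueDiffOn ℝ s) {u : ℝ → ℝ}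
    (hq : ∀ t ∈ s, HasDerivWithinAt q (2 * u t * q t + K - q t ^ 2) s t)
    (hR : ∀ t ∈ s, HasDerivWithinAt R (2 * (q t - u t) * R t) s t) (ht : t ∈ s) (c : ℝ) :
    derivWithin (derivWithin (fun r => c * (q r * R r)) s) s t
      = c * (2 * (u t * q t ^ 2 + 2 * K * q t - K * u t) * R t) := by
  have hfirst : EqOn (derivWithin (fun r => c * (q r * R r)) s)
      (fun r => c * ((K + q r ^ 2) * R r)) s := fun r hr =>
    ((hasDerivWithinAt_mul_of_riccati (hq r hr) (hR r hr)).const_mul c).derivWithin (hs r hr)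
  rw [derivWithin_congr hfirst (hfirst ht),
    ((hasDerivWithinAt_const_add_sq_mul_of_riccati K (hq t ht) (hR t ht)).const_mul c).derivWithin
      (hs t ht)]
  ring

end Riccati

section Mode

variable {d a k₁ k₂ : ℝ} {q Q U : ℝ → ℝ} {v₂ v₃ : ℝ × ℝ × ℝ → ℝ}

theorem mul_eq_separableField
    (hv₂ : ∀ x : ℝ × ℝ × ℝ,
      v₂ x = 4 * a * (k₂ * Q x.2.2 / (k₁ * U x.2.2)) * sin (k₁ * x.1) * sin (k₂ * x.2.1))
    (hv₃ : ∀ x : ℝ × ℝ × ℝ,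
      v₃ x = -4 * a * (Q x.2.2 * q x.2.2 / (k₁ * U x.2.2)) * sin (k₁ * x.1)
        * cos (k₂ * x.2.1)) :
    (fun y => v₂ y * v₃ y) = separableField (fun x₁ => sin (k₁ * x₁) ^ 2)
      (fun t => sin (2 * k₂ * t))
      (fun r => -8 * a ^ 2 * k₂ / k₁ ^ 2 * (q r * (Q r ^ 2 / U r ^ 2))) := by
  funext y
  simp only [separableField, hv₂, hv₃, mul_assoc (2 : ℝ), sin_two_mul]
  ring

theorem sq_sub_sq_eq_separableField_add
    (hv₂ : ∀ x : ℝ × ℝ × ℝ,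
      v₂ x = 4 * a * (k₂ * Q x.2.2 / (k₁ * U x.2.2)) * sin (k₁ * x.1) * sin (k₂ * x.2.1))
    (hv₃ : ∀ x : ℝ × ℝ × ℝ,
      v₃ x = -4 * a * (Q x.2.2 * q x.2.2 / (k₁ * U x.2.2)) * sin (k₁ * x.1)
        * cos (k₂ * x.2.1)) :
    (fun y => v₃ y ^ 2 - v₂ y ^ 2)
      = separableField (fun x₁ => sin (k₁ * x₁) ^ 2) (fun _ => 1)
          (fun r => 8 * a ^ 2 / k₁ ^ 2 * ((-k₂ ^ 2 + q r ^ 2) * (Q r ^ 2 / U r ^ 2)))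
        + separableField (fun x₁ => sin (k₁ * x₁) ^ 2) (fun t => cos (2 * k₂ * t))
          (fun r => 8 * a ^ 2 / k₁ ^ 2 * ((k₂ ^ 2 + q r ^ 2) * (Q r ^ 2 / U r ^ 2))) := by
  funext y
  simp only [Pi.add_apply, separableField, hv₂, hv₃, mul_assoc (2 : ℝ), cos_two_mul]
  linear_combination (-16 * a ^ 2 * k₂ ^ 2 * Q y.2.2 ^ 2 / (k₁ ^ 2 * U y.2.2 ^ 2)
    * sin (k₁ * y.1) ^ 2) * sin_sq_add_cos_sq (k₂ * y.2.1)

theorem d2_d2_sub_d3_d3_add_d2_d3_eq (hd : 0 < d) {u : ℝ → ℝ}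
    (hq : ∀ t ∈ Icc (-d) 0,
      HasDerivWithinAt q (2 * u t * q t + (k₁ ^ 2 + k₂ ^ 2) - q t ^ 2) (Icc (-d) 0) t)
    (hR : ∀ t ∈ Icc (-d) 0, HasDerivWithinAt (fun r => Q r ^ 2 / U r ^ 2)
      (2 * (q t - u t) * (Q t ^ 2 / U t ^ 2)) (Icc (-d) 0) t)
    (hv₂ : ∀ x : ℝ × ℝ × ℝ,
      v₂ x = 4 * a * (k₂ * Q x.2.2 / (k₁ * U x.2.2)) * sin (k₁ * x.1) * sin (k₂ * x.2.1))
    (hv₃ : ∀ x : ℝ × ℝ × ℝ,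
      v₃ x = -4 * a * (Q x.2.2 * q x.2.2 / (k₁ * U x.2.2)) * sin (k₁ * x.1)
        * cos (k₂ * x.2.1))
    (x₁ x₂ : ℝ) {x₃ : ℝ} (hx₃ : x₃ ∈ Icc (-d) 0) :
    d2 (d2 (fun y => v₂ y * v₃ y)) (x₁, x₂, x₃)
        - d3 d (d3 d (fun y => v₂ y * v₃ y)) (x₁, x₂, x₃)
        + d2 (d3 d (fun y => v₃ y ^ 2 - v₂ y ^ 2)) (x₁, x₂, x₃)
      = sin (k₁ * x₁) ^ 2 * (-16 * a ^ 2 * k₂ / k₁ ^ 2 * u x₃ * (Q x₃ ^ 2 / U x₃ ^ 2)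
          * (k₁ ^ 2 - k₂ ^ 2 + q x₃ ^ 2) * sin (2 * k₂ * x₂)) := by
  have hs : UniqueDiffOn ℝ (Icc (-d) 0) := uniqueDiffOn_Icc (by linarith)
  have hcR := fun c =>
    hasDerivWithinAt_const_add_sq_mul_of_riccati c (hq x₃ hx₃) (hR x₃ hx₃)
  rw [mul_eq_separableField hv₂ hv₃, sq_sub_sq_eq_separableField_add hv₂ hv₃,
    d2_d3_separableField_add (by fun_prop) (by fun_prop)
      ((hcR _).const_mul _).differentiableWithinAt ((hcR _).const_mul _).differentiableWithinAt]
  simp only [d2_separableField, d3_separableField, separableField, deriv_const',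
    deriv_sin_const_mul, deriv_cos_const_mul, deriv_const_mul_field',
    derivWithin_derivWithin_const_mul_mul_of_riccati hs hq hR hx₃,
    ((hcR (k₂ ^ 2)).const_mul _).derivWithin (hs x₃ hx₃)]
  ring

end Mode

theorem stmt_18_general (d : ℝ) (hd : 0 < d) (U : ℝ → ℝ)
    (hU : ContDiffOn ℝ 2 U (Set.Icc (-d) 0))
    (hU0 : ∀ t ∈ Set.Icc (-d) 0, U t ≠ 0)
    (k₁ k₂ a : ℝ) (hk₁ : 0 < k₁)
    (q Q : ℝ → ℝ)
    (hq : ContDiffOn ℝ 1 q (Set.Icc (-d) 0))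
    (hode : ∀ x ∈ Set.Icc (-d) 0,
      derivWithin q (Set.Icc (-d) 0) x
        = 2 * (derivWithin U (Set.Icc (-d) 0) x / U x) * q x
          + (k₁ ^ 2 + k₂ ^ 2) - (q x) ^ 2)
    (hQ : ContDiffOn ℝ 2 Q (Set.Icc (-d) 0))
    (hQ' : ∀ x ∈ Set.Icc (-d) 0, derivWithin Q (Set.Icc (-d) 0) x = q x * Q x)
    (v₂ v₃ : ℝ × ℝ × ℝ → ℝ)
    (hv₂ : ∀ x : ℝ × ℝ × ℝ,
      v₂ x = 4 * a * (k₂ * Q x.2.2 / (k₁ * U x.2.2))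
        * Real.sin (k₁ * x.1) * Real.sin (k₂ * x.2.1))
    (hv₃ : ∀ x : ℝ × ℝ × ℝ,
      v₃ x = -4 * a * (Q x.2.2 * q x.2.2 / (k₁ * U x.2.2))
        * Real.sin (k₁ * x.1) * Real.cos (k₂ * x.2.1)) :
    ∀ x₂ : ℝ, ∀ x₃ ∈ Set.Icc (-d) 0,
      (k₁ / (2 * Real.pi)) *
        ∫ x₁ in (0 : ℝ)..(2 * Real.pi / k₁),
          (d2 (d2 (fun y => v₂ y * v₃ y)) (x₁, x₂, x₃)
            - d3 d (d3 d (fun y => v₂ y * v₃ y)) (x₁, x₂, x₃)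
            + d2 (d3 d (fun y => (v₃ y) ^ 2 - (v₂ y) ^ 2)) (x₁, x₂, x₃))
      = -8 * (derivWithin U (Set.Icc (-d) 0) x₃ / (U x₃) ^ 3) * a ^ 2 * (k₂ / k₁ ^ 2)
          * (Q x₃) ^ 2 * (k₁ ^ 2 - k₂ ^ 2 + (q x₃) ^ 2) * Real.sin (2 * k₂ * x₂) := by
  intro x₂ x₃ hx₃
  have hqs : ∀ t ∈ Icc (-d) 0, HasDerivWithinAt q
      (2 * (derivWithin U (Icc (-d) 0) t / U t) * q t + (k₁ ^ 2 + k₂ ^ 2) - q t ^ 2)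
      (Icc (-d) 0) t := fun t ht =>
    hode t ht ▸ (hq.differentiableOn one_ne_zero t ht).hasDerivWithinAt
  have hRs : ∀ t ∈ Icc (-d) 0, HasDerivWithinAt (fun r => Q r ^ 2 / U r ^ 2)
      (2 * (q t - derivWithin U (Icc (-d) 0) t / U t) * (Q t ^ 2 / U t ^ 2)) (Icc (-d) 0) t :=
    fun t ht => hasDerivWithinAt_sq_div_sq
      (hQ' t ht ▸ (hQ.differentiableOn two_ne_zero t ht).hasDerivWithinAt)
      (hU.differentiableOn two_ne_zero t ht).hasDerivWithinAt (hU0 t ht)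
  simp only [d2_d2_sub_d3_d3_add_d2_d3_eq hd hqs hRs hv₂ hv₃ _ x₂ hx₃]
  rw [average_sin_sq_mul hk₁.ne']
  ring

/-- For a single Fourier mode of the linearized kernel, the
`x₁`-average of `(∂₂² − ∂₃²)(v₂v₃) + ∂₂∂₃(v₃² − v₂²)` equals
`−8(U′/U³)a²(k₂/k₁²)Q²(k₁² − k₂² + q²)sin(2k₂x₂)`. -/
theorem stmt_18 (d : ℝ) (hd : 0 < d) (U : ℝ → ℝ)
    (hU : ContDiffOn ℝ 2 U (Set.Icc (-d) 0))
    (hU0 : ∀ t ∈ Set.Icc (-d) 0, U t ≠ 0)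
    (k₁ k₂ a : ℝ) (hk₁ : 0 < k₁) (hk₂ : 0 < k₂)
    (q Q : ℝ → ℝ)
    (hq : ContDiffOn ℝ 1 q (Set.Icc (-d) 0))
    (hode : ∀ x ∈ Set.Icc (-d) 0,
      derivWithin q (Set.Icc (-d) 0) x
        = 2 * (derivWithin U (Set.Icc (-d) 0) x / U x) * q x
          + (k₁ ^ 2 + k₂ ^ 2) - (q x) ^ 2)
    (hq0 : q (-d) = 0)
    (hQ : ContDiffOn ℝ 2 Q (Set.Icc (-d) 0))
    (hQ' : ∀ x ∈ Set.Icc (-d) 0, derivWithin Q (Set.Icc (-d) 0) x = q x * Q x)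
    (v₂ v₃ : ℝ × ℝ × ℝ → ℝ)
    (hv₂ : ∀ x : ℝ × ℝ × ℝ,
      v₂ x = 4 * a * (k₂ * Q x.2.2 / (k₁ * U x.2.2))
        * Real.sin (k₁ * x.1) * Real.sin (k₂ * x.2.1))
    (hv₃ : ∀ x : ℝ × ℝ × ℝ,
      v₃ x = -4 * a * (Q x.2.2 * q x.2.2 / (k₁ * U x.2.2))
        * Real.sin (k₁ * x.1) * Real.cos (k₂ * x.2.1)) :
    ∀ x₂ : ℝ, ∀ x₃ ∈ Set.Icc (-d) 0,
      (k₁ / (2 * Real.pi)) *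
        ∫ x₁ in (0 : ℝ)..(2 * Real.pi / k₁),
          (d2 (d2 (fun y => v₂ y * v₃ y)) (x₁, x₂, x₃)
            - d3 d (d3 d (fun y => v₂ y * v₃ y)) (x₁, x₂, x₃)
            + d2 (d3 d (fun y => (v₃ y) ^ 2 - (v₂ y) ^ 2)) (x₁, x₂, x₃))
      = -8 * (derivWithin U (Set.Icc (-d) 0) x₃ / (U x₃) ^ 3) * a ^ 2 * (k₂ / k₁ ^ 2)
          * (Q x₃) ^ 2 * (k₁ ^ 2 - k₂ ^ 2 + (q x₃) ^ 2) * Real.sin (2 * k₂ * x₂) :=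
  stmt_18_general d hd U hU hU0 k₁ k₂ a hk₁ q Q hq hode hQ hQ' v₂ v₃ hv₂ hv₃
end

section
/- Let d > 0, λ₁ > 0, and let v ∈ C²(ℝ²×[−d,0];ℝ³) be λ₁-periodic in x₁ (v(x₁+λ₁,x₂,x₃) = v(x₁,x₂,x₃)) and divergence-free (∂₁v₁ + ∂₂v₂ + ∂₃v₃ = 0). Then for all (x₂,x₃): (1/λ₁)∫₀^{λ₁} (∇×[(v·∇)v])₁(x₁,x₂,x₃) dx₁ = (1/λ₁)∫₀^{λ₁} [ (∂₂² − ∂₃²)(v₂v₃) + ∂₂∂₃(v₃² − v₂²) ](x₁,x₂,x₃) dx₁, where (∇×w)₁ = ∂₂w₃ − ∂₃w₂ denotes the first component of the curl and (v·∇)v is the vector with components Σⱼ vⱼ∂ⱼvᵢ. -/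
/-!
Write `∂ᵢ` for the derivative within the slab in the direction `eᵢ`. Since `v` is
divergence-free, the convective term is in conservative form, `Σⱼ vⱼ ∂ⱼ w = Σⱼ ∂ⱼ (vⱼ w)`, so the
first component of the curl of `(v·∇)v` is a sum of second derivatives of the products `vᵢ vⱼ`.
After commuting partial derivatives (Schwarz's theorem holds up to the boundary of the slab, which
is the closure of its interior), the terms containing `v₁` collect into
`∂₁ (∂₂ (v₁ v₃) − ∂₃ (v₁ v₂))` and the remaining ones form the integrand on the right. That
`∂₁`-term is the derivative of a `λ₁`-periodic function of `x₁`, so it integrates to zero over a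
period.
-/

/-- Partial derivative in the first coordinate of a scalar field on `ℝ³ = ℝ×ℝ×ℝ`. -/
noncomputable def d1 (f : ℝ × ℝ × ℝ → ℝ) (x : ℝ × ℝ × ℝ) : ℝ :=
  deriv (fun t => f (t, x.2.1, x.2.2)) x.1

open Set
open scoped Pointwise

def slab (d : ℝ) : Set (ℝ × ℝ × ℝ) := {x | x.2.2 ∈ Icc (-d) 0}

noncomputable def slabDeriv (d : ℝ) (e : ℝ × ℝ × ℝ) (f : ℝ × ℝ × ℝ → ℝ) (x : ℝ × ℝ × ℝ) : ℝ :=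
  fderivWithin ℝ f (slab d) x e

local notation "e₁" => ((1, 0, 0) : ℝ × ℝ × ℝ)
local notation "e₂" => ((0, 1, 0) : ℝ × ℝ × ℝ)
local notation "e₃" => ((0, 0, 1) : ℝ × ℝ × ℝ)

section Slab

variable {d : ℝ}

lemma slab_eq_prod : slab d = univ ×ˢ univ ×ˢ Icc (-d) 0 := by
  ext x; simp [slab]

lemma uniqueDiffOn_slab (hd : 0 < d) : UniqueDiffOn ℝ (slab d) := by
  rw [slab_eq_prod]
  exact uniqueDiffOn_univ.prod (uniqueDiffOn_univ.prod (uniqueDiffOn_Icc (by linarith)))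

lemma closure_interior_slab (hd : 0 < d) : closure (interior (slab d)) = slab d := by
  rw [slab_eq_prod, interior_prod_eq, interior_prod_eq, closure_prod_eq, closure_prod_eq,
    interior_univ, closure_univ, interior_Icc, closure_Ioo (by linarith : -d ≠ 0)]

lemma vadd_slab (a b : ℝ) : ((a, b, 0) : ℝ × ℝ × ℝ) +ᵥ slab d = slab d := by
  ext x
  simp [mem_vadd_set_iff_neg_vadd_mem, slab]

variable {f g : ℝ × ℝ × ℝ → ℝ} {x : ℝ × ℝ × ℝ}

lemma hasDerivAt_slabDeriv_e₁ (hf : DifferentiableWithinAt ℝ f (slab d) x) (hx : x ∈ slab d) :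
    HasDerivAt (fun t => f (t, x.2.1, x.2.2)) (slabDeriv d e₁ f x) x.1 := by
  have hline : HasDerivAt (fun t : ℝ => ((t, x.2.1, x.2.2) : ℝ × ℝ × ℝ)) e₁ x.1 :=
    (hasDerivAt_id _).prodMk (hasDerivAt_const _ _)
  rw [← hasDerivWithinAt_univ]
  exact hf.hasFDerivWithinAt.comp_hasDerivWithinAt x.1 hline.hasDerivWithinAt fun _ _ => hx

lemma hasDerivAt_slabDeriv_e₂ (hf : DifferentiableWithinAt ℝ f (slab d) x) (hx : x ∈ slab d) :
    HasDerivAt (fun t => f (x.1, t, x.2.2)) (slabDeriv d e₂ f x) x.2.1 := by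
  have hline : HasDerivAt (fun t : ℝ => ((x.1, t, x.2.2) : ℝ × ℝ × ℝ)) e₂ x.2.1 :=
    (hasDerivAt_const _ _).prodMk ((hasDerivAt_id _).prodMk (hasDerivAt_const _ _))
  rw [← hasDerivWithinAt_univ]
  exact hf.hasFDerivWithinAt.comp_hasDerivWithinAt x.2.1 hline.hasDerivWithinAt fun _ _ => hx

lemma hasDerivWithinAt_slabDeriv_e₃ (hf : DifferentiableWithinAt ℝ f (slab d) x) :
    HasDerivWithinAt (fun t => f (x.1, x.2.1, t)) (slabDeriv d e₃ f x) (Icc (-d) 0) x.2.2 := by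
  have hline : HasDerivAt (fun t : ℝ => ((x.1, x.2.1, t) : ℝ × ℝ × ℝ)) e₃ x.2.2 :=
    (hasDerivAt_const _ _).prodMk ((hasDerivAt_const _ _).prodMk (hasDerivAt_id _))
  exact hf.hasFDerivWithinAt.comp_hasDerivWithinAt x.2.2 hline.hasDerivWithinAt fun _ ht => ht

lemma d1_eq_slabDeriv_of_eqOn (hfg : EqOn f g (slab d))
    (hg : DifferentiableWithinAt ℝ g (slab d) x) (hx : x ∈ slab d) :
    d1 f x = slabDeriv d e₁ g x := by
  have hline : (fun t => f (t, x.2.1, x.2.2)) = fun t => g (t, x.2.1, x.2.2) :=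
    funext fun _ => hfg hx
  rw [d1, hline, (hasDerivAt_slabDeriv_e₁ hg hx).deriv]

lemma d2_eq_slabDeriv_of_eqOn (hfg : EqOn f g (slab d))
    (hg : DifferentiableWithinAt ℝ g (slab d) x) (hx : x ∈ slab d) :
    d2 f x = slabDeriv d e₂ g x := by
  have hline : (fun t => f (x.1, t, x.2.2)) = fun t => g (x.1, t, x.2.2) :=
    funext fun _ => hfg hx
  rw [d2, hline, (hasDerivAt_slabDeriv_e₂ hg hx).deriv]

lemma d3_eq_slabDeriv_of_eqOn (hd : 0 < d) (hfg : EqOn f g (slab d))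
    (hg : DifferentiableWithinAt ℝ g (slab d) x) (hx : x ∈ slab d) :
    d3 d f x = slabDeriv d e₃ g x := by
  have hline : EqOn (fun t => f (x.1, x.2.1, t)) (fun t => g (x.1, x.2.1, t)) (Icc (-d) 0) :=
    fun _ ht => hfg ht
  rw [d3, derivWithin_congr hline (hfg hx)]
  exact (hasDerivWithinAt_slabDeriv_e₃ hg).derivWithin
    (uniqueDiffOn_Icc (by linarith) _ hx)

lemma eqOn_d2_slabDeriv (hf : DifferentiableOn ℝ f (slab d)) :
    EqOn (d2 f) (slabDeriv d e₂ f) (slab d) :=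
  fun y hy => d2_eq_slabDeriv_of_eqOn (eqOn_refl _ _) (hf y hy) hy

lemma eqOn_d3_slabDeriv (hd : 0 < d) (hf : DifferentiableOn ℝ f (slab d)) :
    EqOn (d3 d f) (slabDeriv d e₃ f) (slab d) :=
  fun y hy => d3_eq_slabDeriv_of_eqOn hd (eqOn_refl _ _) (hf y hy) hy

end Slab

section SlabDeriv

variable {d : ℝ} {f g : ℝ × ℝ × ℝ → ℝ} {x : ℝ × ℝ × ℝ}

lemma slabDeriv_congr (hfg : EqOn f g (slab d)) (hx : x ∈ slab d) (e : ℝ × ℝ × ℝ) :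
    slabDeriv d e f x = slabDeriv d e g x := by
  rw [slabDeriv, fderivWithin_congr' hfg hx, slabDeriv]

lemma slabDeriv_add (hd : 0 < d) (hf : DifferentiableWithinAt ℝ f (slab d) x)
    (hg : DifferentiableWithinAt ℝ g (slab d) x) (hx : x ∈ slab d) (e : ℝ × ℝ × ℝ) :
    slabDeriv d e (fun y => f y + g y) x = slabDeriv d e f x + slabDeriv d e g x := by
  simp [slabDeriv, fderivWithin_fun_add (uniqueDiffOn_slab hd x hx) hf hg]

lemma slabDeriv_sub (hd : 0 < d) (hf : DifferentiableWithinAt ℝ f (slab d) x)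
    (hg : DifferentiableWithinAt ℝ g (slab d) x) (hx : x ∈ slab d) (e : ℝ × ℝ × ℝ) :
    slabDeriv d e (fun y => f y - g y) x = slabDeriv d e f x - slabDeriv d e g x := by
  simp [slabDeriv, fderivWithin_fun_sub (uniqueDiffOn_slab hd x hx) hf hg]

lemma slabDeriv_mul (hd : 0 < d) (hf : DifferentiableWithinAt ℝ f (slab d) x)
    (hg : DifferentiableWithinAt ℝ g (slab d) x) (hx : x ∈ slab d) (e : ℝ × ℝ × ℝ) :
    slabDeriv d e (fun y => f y * g y) x = f x * slabDeriv d e g x + g x * slabDeriv d e f x := by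
  simp [slabDeriv, fderivWithin_fun_mul (uniqueDiffOn_slab hd x hx) hf hg]

lemma ContDiffOn.contDiffOn_slabDeriv {m n : WithTop ℕ∞} (hd : 0 < d)
    (hf : ContDiffOn ℝ n f (slab d)) (hmn : m + 1 ≤ n) (e : ℝ × ℝ × ℝ) :
    ContDiffOn ℝ m (slabDeriv d e f) (slab d) :=
  (hf.fderivWithin (uniqueDiffOn_slab hd) hmn).clm_apply contDiffOn_const

lemma ContDiffOn.differentiableOn_slabDeriv (hd : 0 < d) (hf : ContDiffOn ℝ 2 f (slab d))
    (e : ℝ × ℝ × ℝ) : DifferentiableOn ℝ (slabDeriv d e f) (slab d) :=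
  (hf.contDiffOn_slabDeriv hd (m := 1) (by norm_num) e).differentiableOn one_ne_zero

lemma slabDeriv_slabDeriv (hd : 0 < d) (hf : ContDiffOn ℝ 2 f (slab d)) (hx : x ∈ slab d)
    (u w : ℝ × ℝ × ℝ) :
    slabDeriv d u (slabDeriv d w f) x
      = fderivWithin ℝ (fderivWithin ℝ f (slab d)) (slab d) x u w := by
  have hf' : DifferentiableWithinAt ℝ (fderivWithin ℝ f (slab d)) (slab d) x :=
    ((hf.fderivWithin (uniqueDiffOn_slab hd) (m := 1) (by norm_num)).differentiableOn
      one_ne_zero) x hx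
  change fderivWithin ℝ (fun y => fderivWithin ℝ f (slab d) y w) (slab d) x u = _
  rw [fderivWithin_clm_apply (uniqueDiffOn_slab hd x hx) hf' (differentiableWithinAt_const w)]
  simp

lemma slabDeriv_comm (hd : 0 < d) (hf : ContDiffOn ℝ 2 f (slab d)) (hx : x ∈ slab d)
    (u w : ℝ × ℝ × ℝ) :
    slabDeriv d u (slabDeriv d w f) x = slabDeriv d w (slabDeriv d u f) x := by
  rw [slabDeriv_slabDeriv hd hf hx, slabDeriv_slabDeriv hd hf hx]
  exact (hf x hx).isSymmSndFDerivWithinAt (by simp) (uniqueDiffOn_slab hd)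
    (by rw [closure_interior_slab hd]; exact hx) hx u w

lemma slabDeriv_slabDeriv_sub (hd : 0 < d) (hf : ContDiffOn ℝ 2 f (slab d))
    (hg : ContDiffOn ℝ 2 g (slab d)) (hx : x ∈ slab d) (u w : ℝ × ℝ × ℝ) :
    slabDeriv d u (slabDeriv d w fun y => f y - g y) x
      = slabDeriv d u (slabDeriv d w f) x - slabDeriv d u (slabDeriv d w g) x := by
  have hsub : EqOn (slabDeriv d w fun y => f y - g y)
      (fun y => slabDeriv d w f y - slabDeriv d w g y) (slab d) := fun y hy =>
    slabDeriv_sub hd (hf.differentiableOn two_ne_zero y hy) (hg.differentiableOn two_ne_zero y hy)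
      hy w
  rw [slabDeriv_congr hsub hx, slabDeriv_sub hd (hf.differentiableOn_slabDeriv hd w x hx)
    (hg.differentiableOn_slabDeriv hd w x hx) hx]

lemma slabDeriv_periodic {p : ℝ} (hper : ∀ x : ℝ × ℝ × ℝ, f (x.1 + p, x.2.1, x.2.2) = f x)
    (e : ℝ × ℝ × ℝ) (a b c : ℝ) : slabDeriv d e f (a + p, b, c) = slabDeriv d e f (a, b, c) := by
  set q : ℝ × ℝ × ℝ := (p, 0, 0)
  have hshift : (fun y => f (y + q)) = f := funext fun y => by
    rw [← hper y]; congr 1; ext <;> simp [q]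
  calc slabDeriv d e f (a + p, b, c)
      = fderivWithin ℝ f (q +ᵥ slab d) ((a, b, c) + q) e := by
        rw [vadd_slab]; simp [slabDeriv, q]
    _ = slabDeriv d e f (a, b, c) := by
        rw [← fderivWithin_comp_add_right, hshift, slabDeriv]

lemma d2_d2_eq_slabDeriv (hd : 0 < d) (hf : ContDiffOn ℝ 2 f (slab d)) (hx : x ∈ slab d) :
    d2 (d2 f) x = slabDeriv d e₂ (slabDeriv d e₂ f) x :=
  d2_eq_slabDeriv_of_eqOn (eqOn_d2_slabDeriv (hf.differentiableOn two_ne_zero))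
    (hf.differentiableOn_slabDeriv hd e₂ x hx) hx

lemma d3_d3_eq_slabDeriv (hd : 0 < d) (hf : ContDiffOn ℝ 2 f (slab d)) (hx : x ∈ slab d) :
    d3 d (d3 d f) x = slabDeriv d e₃ (slabDeriv d e₃ f) x :=
  d3_eq_slabDeriv_of_eqOn hd (eqOn_d3_slabDeriv hd (hf.differentiableOn two_ne_zero))
    (hf.differentiableOn_slabDeriv hd e₃ x hx) hx

lemma d2_d3_eq_slabDeriv (hd : 0 < d) (hf : ContDiffOn ℝ 2 f (slab d)) (hx : x ∈ slab d) :
    d2 (d3 d f) x = slabDeriv d e₂ (slabDeriv d e₃ f) x :=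
  d2_eq_slabDeriv_of_eqOn (eqOn_d3_slabDeriv hd (hf.differentiableOn two_ne_zero))
    (hf.differentiableOn_slabDeriv hd e₃ x hx) hx

end SlabDeriv

open MeasureTheory in
lemma integral_add_deriv_eq_integral {R g g' : ℝ → ℝ} {a b : ℝ}
    (hg : ∀ t ∈ uIcc a b, HasDerivAt g (g' t) t) (hg' : IntervalIntegrable g' volume a b)
    (hab : g a = g b) : ∫ t in a..b, (R t + g' t) = ∫ t in a..b, R t := by
  have hzero : ∫ t in a..b, g' t = 0 := by
    rw [intervalIntegral.integral_eq_sub_of_hasDerivAt hg hg', hab, sub_self]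
  -- if `R` is not integrable, neither is `R + g'`, and both integrals take the junk value `0`
  by_cases hR : IntervalIntegrable R volume a b
  · rw [intervalIntegral.integral_add hR hg', hzero, add_zero]
  · have hRg : ¬IntervalIntegrable (fun t => R t + g' t) volume a b := fun h =>
      hR (by simpa using h.sub hg')
    rw [intervalIntegral.integral_undef hR, intervalIntegral.integral_undef hRg]

section Convection

variable {d : ℝ} {v₁ v₂ v₃ : ℝ × ℝ × ℝ → ℝ}

lemma convective_eqOn_slabDeriv (hd : 0 < d) (hv₁ : DifferentiableOn ℝ v₁ (slab d))
    (hv₂ : DifferentiableOn ℝ v₂ (slab d)) (hv₃ : DifferentiableOn ℝ v₃ (slab d))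
    (hdiv : ∀ x ∈ slab d, d1 v₁ x + d2 v₂ x + d3 d v₃ x = 0)
    {w : ℝ × ℝ × ℝ → ℝ} (hw : DifferentiableOn ℝ w (slab d)) :
    EqOn (fun y => v₁ y * d1 w y + v₂ y * d2 w y + v₃ y * d3 d w y)
      (fun y => slabDeriv d e₁ (fun z => v₁ z * w z) y + slabDeriv d e₂ (fun z => v₂ z * w z) y
        + slabDeriv d e₃ (fun z => v₃ z * w z) y) (slab d) := by
  intro y hy
  have hdiv_y := hdiv y hy
  rw [d1_eq_slabDeriv_of_eqOn (eqOn_refl _ _) (hv₁ y hy) hy,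
    d2_eq_slabDeriv_of_eqOn (eqOn_refl _ _) (hv₂ y hy) hy,
    d3_eq_slabDeriv_of_eqOn hd (eqOn_refl _ _) (hv₃ y hy) hy] at hdiv_y
  simp only
  rw [d1_eq_slabDeriv_of_eqOn (eqOn_refl _ _) (hw y hy) hy,
    d2_eq_slabDeriv_of_eqOn (eqOn_refl _ _) (hw y hy) hy,
    d3_eq_slabDeriv_of_eqOn hd (eqOn_refl _ _) (hw y hy) hy,
    slabDeriv_mul hd (hv₁ y hy) (hw y hy) hy, slabDeriv_mul hd (hv₂ y hy) (hw y hy) hy,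
    slabDeriv_mul hd (hv₃ y hy) (hw y hy) hy]
  linear_combination (-w y) * hdiv_y

lemma d2_convective_eq (hd : 0 < d) (hv₁ : ContDiffOn ℝ 2 v₁ (slab d))
    (hv₂ : ContDiffOn ℝ 2 v₂ (slab d)) (hv₃ : ContDiffOn ℝ 2 v₃ (slab d))
    (hdiv : ∀ x ∈ slab d, d1 v₁ x + d2 v₂ x + d3 d v₃ x = 0)
    {w : ℝ × ℝ × ℝ → ℝ} (hw : ContDiffOn ℝ 2 w (slab d)) {x : ℝ × ℝ × ℝ} (hx : x ∈ slab d) :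
    d2 (fun y => v₁ y * d1 w y + v₂ y * d2 w y + v₃ y * d3 d w y) x
      = slabDeriv d e₂ (slabDeriv d e₁ fun z => v₁ z * w z) x
        + slabDeriv d e₂ (slabDeriv d e₂ fun z => v₂ z * w z) x
        + slabDeriv d e₂ (slabDeriv d e₃ fun z => v₃ z * w z) x := by
  have D₁ := (hv₁.mul hw).differentiableOn_slabDeriv hd e₁ x hx
  have D₂ := (hv₂.mul hw).differentiableOn_slabDeriv hd e₂ x hx
  have D₃ := (hv₃.mul hw).differentiableOn_slabDeriv hd e₃ x hx
  rw [d2_eq_slabDeriv_of_eqOn (convective_eqOn_slabDeriv hd (hv₁.differentiableOn two_ne_zero)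
      (hv₂.differentiableOn two_ne_zero) (hv₃.differentiableOn two_ne_zero) hdiv
      (hw.differentiableOn two_ne_zero)) ((D₁.fun_add D₂).fun_add D₃) hx,
    slabDeriv_add hd (D₁.fun_add D₂) D₃ hx, slabDeriv_add hd D₁ D₂ hx]

lemma d3_convective_eq (hd : 0 < d) (hv₁ : ContDiffOn ℝ 2 v₁ (slab d))
    (hv₂ : ContDiffOn ℝ 2 v₂ (slab d)) (hv₃ : ContDiffOn ℝ 2 v₃ (slab d))
    (hdiv : ∀ x ∈ slab d, d1 v₁ x + d2 v₂ x + d3 d v₃ x = 0)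
    {w : ℝ × ℝ × ℝ → ℝ} (hw : ContDiffOn ℝ 2 w (slab d)) {x : ℝ × ℝ × ℝ} (hx : x ∈ slab d) :
    d3 d (fun y => v₁ y * d1 w y + v₂ y * d2 w y + v₃ y * d3 d w y) x
      = slabDeriv d e₃ (slabDeriv d e₁ fun z => v₁ z * w z) x
        + slabDeriv d e₃ (slabDeriv d e₂ fun z => v₂ z * w z) x
        + slabDeriv d e₃ (slabDeriv d e₃ fun z => v₃ z * w z) x := by
  have D₁ := (hv₁.mul hw).differentiableOn_slabDeriv hd e₁ x hx
  have D₂ := (hv₂.mul hw).differentiableOn_slabDeriv hd e₂ x hx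
  have D₃ := (hv₃.mul hw).differentiableOn_slabDeriv hd e₃ x hx
  rw [d3_eq_slabDeriv_of_eqOn hd (convective_eqOn_slabDeriv hd
      (hv₁.differentiableOn two_ne_zero) (hv₂.differentiableOn two_ne_zero)
      (hv₃.differentiableOn two_ne_zero) hdiv (hw.differentiableOn two_ne_zero))
      ((D₁.fun_add D₂).fun_add D₃) hx,
    slabDeriv_add hd (D₁.fun_add D₂) D₃ hx, slabDeriv_add hd D₁ D₂ hx]

lemma curl_convective_eq (hd : 0 < d) (hv₁ : ContDiffOn ℝ 2 v₁ (slab d))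
    (hv₂ : ContDiffOn ℝ 2 v₂ (slab d)) (hv₃ : ContDiffOn ℝ 2 v₃ (slab d))
    (hdiv : ∀ x ∈ slab d, d1 v₁ x + d2 v₂ x + d3 d v₃ x = 0) {x : ℝ × ℝ × ℝ} (hx : x ∈ slab d) :
    d2 (fun y => v₁ y * d1 v₃ y + v₂ y * d2 v₃ y + v₃ y * d3 d v₃ y) x
        - d3 d (fun y => v₁ y * d1 v₂ y + v₂ y * d2 v₂ y + v₃ y * d3 d v₂ y) x
      = d2 (d2 (fun y => v₂ y * v₃ y)) x - d3 d (d3 d (fun y => v₂ y * v₃ y)) x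
          + d2 (d3 d (fun y => v₃ y ^ 2 - v₂ y ^ 2)) x
        + slabDeriv d e₁ (fun y => slabDeriv d e₂ (fun z => v₁ z * v₃ z) y
            - slabDeriv d e₃ (fun z => v₁ z * v₂ z) y) x := by
  have h₁₂ := hv₁.mul hv₂
  have h₁₃ := hv₁.mul hv₃
  have h₂₂ := hv₂.mul hv₂
  have h₂₃ := hv₂.mul hv₃
  have h₃₃ := hv₃.mul hv₃
  have hsq : (fun y => v₃ y ^ 2 - v₂ y ^ 2) = fun y => v₃ y * v₃ y - v₂ y * v₂ y := by
    funext y; ring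
  have hcomm : (fun y => v₃ y * v₂ y) = fun y => v₂ y * v₃ y := funext fun y => mul_comm _ _
  rw [d2_convective_eq hd hv₁ hv₂ hv₃ hdiv hv₃ hx, d3_convective_eq hd hv₁ hv₂ hv₃ hdiv hv₂ hx,
    d2_d2_eq_slabDeriv hd h₂₃ hx, d3_d3_eq_slabDeriv hd h₂₃ hx, hsq,
    d2_d3_eq_slabDeriv hd (h₃₃.sub h₂₂) hx, slabDeriv_slabDeriv_sub hd h₃₃ h₂₂ hx, hcomm,
    slabDeriv_sub hd (h₁₃.differentiableOn_slabDeriv hd e₂ x hx)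
      (h₁₂.differentiableOn_slabDeriv hd e₃ x hx) hx,
    slabDeriv_comm hd h₁₃ hx e₂ e₁, slabDeriv_comm hd h₁₂ hx e₃ e₁,
    slabDeriv_comm hd h₂₂ hx e₃ e₂]
  ring

end Convection

theorem stmt_19_general (d lam1 : ℝ) (hd : 0 < d)
    (v₁ v₂ v₃ : ℝ × ℝ × ℝ → ℝ)
    (hv₁ : ContDiffOn ℝ 2 v₁ {x : ℝ × ℝ × ℝ | x.2.2 ∈ Set.Icc (-d) 0})
    (hv₂ : ContDiffOn ℝ 2 v₂ {x : ℝ × ℝ × ℝ | x.2.2 ∈ Set.Icc (-d) 0})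
    (hv₃ : ContDiffOn ℝ 2 v₃ {x : ℝ × ℝ × ℝ | x.2.2 ∈ Set.Icc (-d) 0})
    (hper₁ : ∀ x : ℝ × ℝ × ℝ, v₁ (x.1 + lam1, x.2.1, x.2.2) = v₁ x)
    (hper₂ : ∀ x : ℝ × ℝ × ℝ, v₂ (x.1 + lam1, x.2.1, x.2.2) = v₂ x)
    (hper₃ : ∀ x : ℝ × ℝ × ℝ, v₃ (x.1 + lam1, x.2.1, x.2.2) = v₃ x)
    (hdiv : ∀ x : ℝ × ℝ × ℝ, x.2.2 ∈ Set.Icc (-d) 0 →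
      d1 v₁ x + d2 v₂ x + d3 d v₃ x = 0) :
    ∀ x₂ : ℝ, ∀ x₃ ∈ Set.Icc (-d) 0,
      (1 / lam1) *
        ∫ x₁ in (0 : ℝ)..lam1,
          (d2 (fun y => v₁ y * d1 v₃ y + v₂ y * d2 v₃ y + v₃ y * d3 d v₃ y) (x₁, x₂, x₃)
            - d3 d (fun y => v₁ y * d1 v₂ y + v₂ y * d2 v₂ y + v₃ y * d3 d v₂ y)
                (x₁, x₂, x₃))
      = (1 / lam1) *
          ∫ x₁ in (0 : ℝ)..lam1,
            (d2 (d2 (fun y => v₂ y * v₃ y)) (x₁, x₂, x₃)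
              - d3 d (d3 d (fun y => v₂ y * v₃ y)) (x₁, x₂, x₃)
              + d2 (d3 d (fun y => (v₃ y) ^ 2 - (v₂ y) ^ 2)) (x₁, x₂, x₃)) := by
  intro x₂ x₃ hx₃
  have hx : ∀ t : ℝ, ((t, x₂, x₃) : ℝ × ℝ × ℝ) ∈ slab d := fun _ => hx₃
  set flux := fun y => slabDeriv d e₂ (fun z => v₁ z * v₃ z) y
    - slabDeriv d e₃ (fun z => v₁ z * v₂ z) y
  have hflux : ContDiffOn ℝ 1 flux (slab d) :=
    ((hv₁.mul hv₃).contDiffOn_slabDeriv hd le_rfl e₂).sub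
      ((hv₁.mul hv₂).contDiffOn_slabDeriv hd le_rfl e₃)
  have hflux_periodic : flux (0, x₂, x₃) = flux (lam1, x₂, x₃) := by
    have hper₁₂ : ∀ x : ℝ × ℝ × ℝ, v₁ (x.1 + lam1, x.2.1, x.2.2) * v₂ (x.1 + lam1, x.2.1, x.2.2)
        = v₁ x * v₂ x := fun x => by rw [hper₁, hper₂]
    have hper₁₃ : ∀ x : ℝ × ℝ × ℝ, v₁ (x.1 + lam1, x.2.1, x.2.2) * v₃ (x.1 + lam1, x.2.1, x.2.2)
        = v₁ x * v₃ x := fun x => by rw [hper₁, hper₃]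
    rw [← zero_add lam1]
    simp only [flux, slabDeriv_periodic (f := fun z => v₁ z * v₂ z) hper₁₂,
      slabDeriv_periodic (f := fun z => v₁ z * v₃ z) hper₁₃]
  congr 1
  rw [intervalIntegral.integral_congr fun t _ => curl_convective_eq hd hv₁ hv₂ hv₃ hdiv (hx t)]
  refine integral_add_deriv_eq_integral (g := fun t => flux (t, x₂, x₃))
    (fun t _ => hasDerivAt_slabDeriv_e₁ (hflux.differentiableOn one_ne_zero _ (hx t)) (hx t))
    ?_ hflux_periodic
  exact ((hflux.contDiffOn_slabDeriv hd (m := 0) le_rfl e₁).continuousOn.comp_continuous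
    (by fun_prop) hx).intervalIntegrable _ _

/-- For a `λ₁`-periodic, divergence-free `C²` vector field
`v = (v₁,v₂,v₃)` on `ℝ²×[−d,0]`, the `x₁`-average of the first component of the
curl of `(v·∇)v` equals the `x₁`-average of
`(∂₂² − ∂₃²)(v₂v₃) + ∂₂∂₃(v₃² − v₂²)`. -/
theorem stmt_19 (d lam1 : ℝ) (hd : 0 < d) (hlam1 : 0 < lam1)
    (v₁ v₂ v₃ : ℝ × ℝ × ℝ → ℝ)
    (hv₁ : ContDiffOn ℝ 2 v₁ {x : ℝ × ℝ × ℝ | x.2.2 ∈ Set.Icc (-d) 0})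
    (hv₂ : ContDiffOn ℝ 2 v₂ {x : ℝ × ℝ × ℝ | x.2.2 ∈ Set.Icc (-d) 0})
    (hv₃ : ContDiffOn ℝ 2 v₃ {x : ℝ × ℝ × ℝ | x.2.2 ∈ Set.Icc (-d) 0})
    (hper₁ : ∀ x : ℝ × ℝ × ℝ, v₁ (x.1 + lam1, x.2.1, x.2.2) = v₁ x)
    (hper₂ : ∀ x : ℝ × ℝ × ℝ, v₂ (x.1 + lam1, x.2.1, x.2.2) = v₂ x)
    (hper₃ : ∀ x : ℝ × ℝ × ℝ, v₃ (x.1 + lam1, x.2.1, x.2.2) = v₃ x)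
    (hdiv : ∀ x : ℝ × ℝ × ℝ, x.2.2 ∈ Set.Icc (-d) 0 →
      d1 v₁ x + d2 v₂ x + d3 d v₃ x = 0) :
    ∀ x₂ : ℝ, ∀ x₃ ∈ Set.Icc (-d) 0,
      (1 / lam1) *
        ∫ x₁ in (0 : ℝ)..lam1,
          (d2 (fun y => v₁ y * d1 v₃ y + v₂ y * d2 v₃ y + v₃ y * d3 d v₃ y) (x₁, x₂, x₃)
            - d3 d (fun y => v₁ y * d1 v₂ y + v₂ y * d2 v₂ y + v₃ y * d3 d v₂ y)
                (x₁, x₂, x₃))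
      = (1 / lam1) *
          ∫ x₁ in (0 : ℝ)..lam1,
            (d2 (d2 (fun y => v₂ y * v₃ y)) (x₁, x₂, x₃)
              - d3 d (d3 d (fun y => v₂ y * v₃ y)) (x₁, x₂, x₃)
              + d2 (d3 d (fun y => (v₃ y) ^ 2 - (v₂ y) ^ 2)) (x₁, x₂, x₃)) :=
  stmt_19_general d lam1 hd v₁ v₂ v₃ hv₁ hv₂ hv₃ hper₁ hper₂ hper₃ hdiv
end
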